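/- Let K be a field and f ∈ K(z) a rational function of degree d ≥ 2 with bad monodromy, witnessed by a nonempty set of cosets M inside Q := π_1(G_∞(K,f,t))/π_1(G_∞(K^sep,f,t)). Let α ∈ K be not strictly post-critical for f and suppose π_1(G_∞(K,f,t)) = π_1(G_∞(K,f,α)). Then FPP(G_∞(K,f,α)) ≥ #M/|Q| > 0. -/

import Mathlib

/-!
Common framework: automorphisms of the `d`-adic rooted tree.

Vertices of the `d`-adic rooted tree `T` are finite words over the alphabet `Fin d`
(the root is the empty word `[]`, and the immediate descendants of `v` are the words
`v ++ [i]`).  An automorphism of `T` is a permutation of the vertex set preserving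
the length (= level) of words and the prefix (= ancestor) relation.
-/

namespace ArboGal

/-- An automorphism of the `d`-adic rooted tree. -/
structure TreeAut (d : ℕ) where
  toPerm : Equiv.Perm (List (Fin d))
  length_eq : ∀ v, (toPerm v).length = v.length
  prefix_mono : ∀ v w, v <+: w → toPerm v <+: toPerm w

namespace TreeAut

variable {d : ℕ}

lemma toPerm_injective : Function.Injective (toPerm : TreeAut d → Equiv.Perm (List (Fin d))) := by
  rintro ⟨a, _, _⟩ ⟨b, _, _⟩ h
  simpa using h

lemma symm_length (g : TreeAut d) (v : List (Fin d)) :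
    (g.toPerm.symm v).length = v.length := by
  conv_rhs => rw [← Equiv.apply_symm_apply g.toPerm v, g.length_eq]

lemma symm_prefix (g : TreeAut d) {v w : List (Fin d)} (h : v <+: w) :
    g.toPerm.symm v <+: g.toPerm.symm w := by
  set p := (g.toPerm.symm w).take v.length with hp
  have hpw : p <+: g.toPerm.symm w := List.take_prefix _ _
  have h1 : g.toPerm p <+: w := by
    have h2 := g.prefix_mono _ _ hpw
    rwa [Equiv.apply_symm_apply] at h2
  have hvlen : v.length ≤ w.length := h.length_le
  have hplen : (g.toPerm p).length = v.length := by
    rw [g.length_eq, hp, List.length_take, symm_length]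
    omega
  have hgpv : g.toPerm p = v := by
    have e1 := List.prefix_iff_eq_take.mp h1
    have e2 := List.prefix_iff_eq_take.mp h
    rw [hplen] at e1
    rw [e1, ← e2]
  have hfin : p = g.toPerm.symm v := by
    rw [← hgpv, Equiv.symm_apply_apply]
  rw [← hfin]
  exact hpw

instance : Group (TreeAut d) where
  one := ⟨Equiv.refl _, fun _ => rfl, fun _ _ h => h⟩
  mul g h := ⟨g.toPerm.trans h.toPerm,
    fun v => by simp [Equiv.trans_apply, h.length_eq, g.length_eq],
    fun v w hvw => h.prefix_mono _ _ (g.prefix_mono _ _ hvw)⟩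
  inv g := ⟨g.toPerm.symm, g.symm_length, fun _ _ h => g.symm_prefix h⟩
  mul_assoc a b c := toPerm_injective rfl
  one_mul a := toPerm_injective (Equiv.ext fun _ => rfl)
  mul_one a := toPerm_injective (Equiv.ext fun _ => rfl)
  inv_mul_cancel a := toPerm_injective (Equiv.symm_trans_self a.toPerm)

@[simp] lemma mul_toPerm (g h : TreeAut d) : (g * h).toPerm = g.toPerm.trans h.toPerm := rfl
@[simp] lemma one_toPerm : (1 : TreeAut d).toPerm = Equiv.refl _ := rfl
@[simp] lemma inv_toPerm (g : TreeAut d) : (g⁻¹).toPerm = g.toPerm.symm := rfl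

lemma apply_append (g : TreeAut d) (v w : List (Fin d)) :
    g.toPerm (v ++ w) = g.toPerm v ++ (g.toPerm (v ++ w)).drop v.length := by
  obtain ⟨s, hs⟩ := g.prefix_mono v (v ++ w) (List.prefix_append v w)
  rw [← hs]
  congr 1
  rw [← g.length_eq v]
  exact List.drop_left.symm

/-- The section `g|_v` of `g` at the vertex `v` : the unique automorphism of `T` with
`(v ++ w)^g = v^g ++ w^(g|_v)` for all words `w`. -/
def sect (g : TreeAut d) (v : List (Fin d)) : TreeAut d where
  toPerm :=
    { toFun := fun w => (g.toPerm (v ++ w)).drop v.length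
      invFun := fun w => (g.toPerm.symm (g.toPerm v ++ w)).drop v.length
      left_inv := by
        intro w
        show (g.toPerm.symm (g.toPerm v ++ (g.toPerm (v ++ w)).drop v.length)).drop v.length = w
        rw [← apply_append g v w, Equiv.symm_apply_apply, List.drop_left]
      right_inv := by
        intro w
        set u := g.toPerm.symm (g.toPerm v ++ w) with hu
        have hvu : v <+: u := by
          have h2 : g.toPerm.symm (g.toPerm v) <+: u := g.symm_prefix (List.prefix_append _ _)
          rwa [Equiv.symm_apply_apply] at h2
        have hrecon : v ++ u.drop v.length = u := by
          obtain ⟨s, hs⟩ := hvu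
          rw [← hs, List.drop_left]
        show (g.toPerm (v ++ u.drop v.length)).drop v.length = w
        rw [hrecon, hu, Equiv.apply_symm_apply, ← g.length_eq v, List.drop_left] }
  length_eq := fun w => by
    show ((g.toPerm (v ++ w)).drop v.length).length = w.length
    rw [List.length_drop, g.length_eq, List.length_append]
    omega
  prefix_mono := by
    intro w₁ w₂ h
    have h2 : g.toPerm (v ++ w₁) <+: g.toPerm (v ++ w₂) := by
      apply g.prefix_mono
      obtain ⟨s, rfl⟩ := h
      rw [← List.append_assoc]
      exact List.prefix_append _ _
    show (g.toPerm (v ++ w₁)).drop v.length <+: (g.toPerm (v ++ w₂)).drop v.length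
    rw [apply_append g v w₁, apply_append g v w₂] at h2
    exact (List.prefix_append_right_inj _).mp h2

@[simp] lemma sect_apply (g : TreeAut d) (v w : List (Fin d)) :
    (sect g v).toPerm w = (g.toPerm (v ++ w)).drop v.length := rfl

lemma concat_of_prefix_succ {α : Type*} {l₁ l₂ : List α} (h : l₁ <+: l₂)
    (hl : l₂.length = l₁.length + 1) (x : α) : l₂ = l₁ ++ [l₂.getLastD x] := by
  obtain ⟨s, rfl⟩ := h
  have hs : s.length = 1 := by
    rw [List.length_append] at hl
    omega
  obtain ⟨a, rfl⟩ := List.length_eq_one_iff.mp hs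
  rw [List.getLastD_concat]

lemma apply_child (g : TreeAut d) (v : List (Fin d)) (i : Fin d) :
    g.toPerm (v ++ [i]) = g.toPerm v ++ [(g.toPerm (v ++ [i])).getLastD i] := by
  apply concat_of_prefix_succ (g.prefix_mono v _ (List.prefix_append _ _))
  rw [g.length_eq, g.length_eq, List.length_append, List.length_singleton]

/-- The label `g|_v^1` of `g` at the vertex `v`, i.e. the permutation induced by `g` on the
immediate descendants of `v` (identified with `Fin d`): `(v ++ [i])^g = v^g ++ [(label g v) i]`. -/
def label (g : TreeAut d) (v : List (Fin d)) : Equiv.Perm (Fin d) where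
  toFun i := (g.toPerm (v ++ [i])).getLastD i
  invFun j := (g.toPerm.symm (g.toPerm v ++ [j])).getLastD j
  left_inv := by
    intro i
    show (g.toPerm.symm (g.toPerm v ++ [(g.toPerm (v ++ [i])).getLastD i])).getLastD _ = i
    rw [← apply_child, Equiv.symm_apply_apply, List.getLastD_concat]
  right_inv := by
    intro j
    set u := g.toPerm.symm (g.toPerm v ++ [j]) with hu
    have hvu : v <+: u := by
      have h2 : g.toPerm.symm (g.toPerm v) <+: u := g.symm_prefix (List.prefix_append _ _)
      rwa [Equiv.symm_apply_apply] at h2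
    have hlen : u.length = v.length + 1 := by
      rw [hu, symm_length, List.length_append, g.length_eq, List.length_singleton]
    have h3 : u = v ++ [u.getLastD j] := concat_of_prefix_succ hvu hlen j
    show (g.toPerm (v ++ [u.getLastD j])).getLastD (u.getLastD j) = j
    rw [← h3, hu, Equiv.apply_symm_apply, List.getLastD_concat]

lemma label_apply (g : TreeAut d) (v : List (Fin d)) (i : Fin d) :
    label g v i = (g.toPerm (v ++ [i])).getLastD i := rfl

lemma apply_concat (g : TreeAut d) (v : List (Fin d)) (i : Fin d) :
    g.toPerm (v ++ [i]) = g.toPerm v ++ [label g v i] := apply_child g v i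

end TreeAut

open TreeAut

/-! ### Portraits

Every assignment of a permutation of `Fin d` (a "label") to each vertex determines a unique
automorphism of the `d`-adic tree; this is used to construct explicit automorphisms. -/

/-- Auxiliary function for `ofPortrait`. -/
def pf (c : List (Fin d) → Equiv.Perm (Fin d)) : List (Fin d) → List (Fin d) → List (Fin d)
  | _, [] => []
  | v, i :: w => c v i :: pf c (v ++ [i]) w

/-- Auxiliary inverse function for `ofPortrait`. -/
def pfInv (c : List (Fin d) → Equiv.Perm (Fin d)) : List (Fin d) → List (Fin d) → List (Fin d)
  | _, [] => []
  | v, j :: w => (c v)⁻¹ j :: pfInv c (v ++ [(c v)⁻¹ j]) w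

lemma pf_leftInv (c : List (Fin d) → Equiv.Perm (Fin d)) :
    ∀ (w v : List (Fin d)), pfInv c v (pf c v w) = w := by
  intro w
  induction w with
  | nil => intro v; rfl
  | cons i w ih =>
      intro v
      show (c v)⁻¹ (c v i) :: pfInv c (v ++ [(c v)⁻¹ (c v i)]) (pf c (v ++ [i]) w) = i :: w
      rw [← Equiv.Perm.mul_apply, inv_mul_cancel, Equiv.Perm.one_apply, ih]

lemma pf_rightInv (c : List (Fin d) → Equiv.Perm (Fin d)) :
    ∀ (w v : List (Fin d)), pf c v (pfInv c v w) = w := by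
  intro w
  induction w with
  | nil => intro v; rfl
  | cons j w ih =>
      intro v
      show c v ((c v)⁻¹ j) :: pf c (v ++ [(c v)⁻¹ j]) (pfInv c (v ++ [(c v)⁻¹ j]) w) = j :: w
      rw [← Equiv.Perm.mul_apply, mul_inv_cancel, Equiv.Perm.one_apply, ih]

lemma pf_length (c : List (Fin d) → Equiv.Perm (Fin d)) :
    ∀ (w v : List (Fin d)), (pf c v w).length = w.length := by
  intro w
  induction w with
  | nil => intro v; rfl
  | cons i w ih =>
      intro v
      show (c v i :: pf c (v ++ [i]) w).length = w.length + 1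
      rw [List.length_cons, ih]

lemma pf_append (c : List (Fin d) → Equiv.Perm (Fin d)) :
    ∀ (a b v : List (Fin d)), pf c v (a ++ b) = pf c v a ++ pf c (v ++ a) b := by
  intro a
  induction a with
  | nil => intro b v; simp [pf]
  | cons i a ih =>
      intro b v
      show c v i :: pf c (v ++ [i]) (a ++ b) = (c v i :: pf c (v ++ [i]) a) ++ pf c (v ++ i :: a) b
      rw [ih, List.cons_append, ← List.append_cons]

/-- The automorphism of the `d`-adic tree whose label at each vertex `v` is `c v`. -/
def ofPortrait (c : List (Fin d) → Equiv.Perm (Fin d)) : TreeAut d where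
  toPerm := ⟨pf c [], pfInv c [], fun w => pf_leftInv c w [], fun w => pf_rightInv c w []⟩
  length_eq := fun v => pf_length c v []
  prefix_mono := by
    intro v w h
    obtain ⟨s, rfl⟩ := h
    change pf c [] v <+: pf c [] (v ++ s)
    rw [pf_append]
    exact ⟨pf c ([] ++ v) s, rfl⟩

lemma ofPortrait_label (c : List (Fin d) → Equiv.Perm (Fin d)) (v : List (Fin d)) :
    label (ofPortrait c) v = c v := by
  apply Equiv.ext
  intro i
  show ((ofPortrait c).toPerm (v ++ [i])).getLastD i = (c v) i
  have h1 : (ofPortrait c).toPerm (v ++ [i]) = pf c [] (v ++ [i]) := rfl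
  rw [h1, pf_append]
  have h2 : pf c ([] ++ v) [i] = [c v i] := by simp [pf]
  rw [h2, List.getLastD_concat]


open TreeAut

section Predicates

variable {d : ℕ}

/-- A set of tree automorphisms is *self-similar* if it is closed under taking sections. -/
def SelfSimilarS (S : Set (TreeAut d)) : Prop :=
  ∀ g ∈ S, ∀ v : List (Fin d), sect g v ∈ S

/-- A set of tree automorphisms is *level-transitive* if it acts transitively on each
level of the tree. -/
def LevelTrans (S : Set (TreeAut d)) : Prop :=
  ∀ v w : List (Fin d), v.length = w.length → ∃ g ∈ S, g.toPerm v = w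

/-- `φ_v(st_S(v))`: the set of sections at `v` of the elements of `S` stabilizing `v`. -/
def vertexSections (S : Set (TreeAut d)) (v : List (Fin d)) : Set (TreeAut d) :=
  {x | ∃ g ∈ S, g.toPerm v = v ∧ sect g v = x}

/-- A set of tree automorphisms is *fractal* if it is self-similar, level-transitive and
`φ_v(st_S(v)) = S` for every vertex `v`. -/
def FractalS (S : Set (TreeAut d)) : Prop :=
  SelfSimilarS S ∧ LevelTrans S ∧ ∀ v : List (Fin d), vertexSections S v = S

/-- The intermediate group `G_H = {g ∈ G ∣ (g|_v)(g|_w)⁻¹ ∈ H for all vertices v, w}`. -/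
def GHset (G H : Set (TreeAut d)) : Set (TreeAut d) :=
  {g ∈ G | ∀ v w : List (Fin d), sect g v * (sect g w)⁻¹ ∈ H}

/-- Two automorphisms agree on all vertices of level at most `n`. -/
def agreeUpTo (n : ℕ) (g h : TreeAut d) : Prop :=
  ∀ v : List (Fin d), v.length ≤ n → g.toPerm v = h.toPerm v

/-- A set of tree automorphisms is *closed* (in the congruence = profinite topology of
`Aut T`) if it contains every automorphism that can be approximated up to every level by
elements of the set. -/
def CongrClosedS (S : Set (TreeAut d)) : Prop :=
  ∀ g : TreeAut d, (∀ n : ℕ, ∃ h ∈ S, agreeUpTo n g h) → g ∈ S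

/-- The closure of a subgroup of `Aut T` in the congruence (profinite) topology. -/
def congrClosure (Γ : Subgroup (TreeAut d)) : Subgroup (TreeAut d) where
  carrier := {g | ∀ n : ℕ, ∃ h ∈ Γ, agreeUpTo n g h}
  one_mem' := fun n => ⟨1, Γ.one_mem, fun _ _ => rfl⟩
  mul_mem' := by
    intro a b ha hb n
    obtain ⟨x, hx, hax⟩ := ha n
    obtain ⟨y, hy, hby⟩ := hb n
    refine ⟨x * y, Γ.mul_mem hx hy, fun v hv => ?_⟩
    show b.toPerm (a.toPerm v) = y.toPerm (x.toPerm v)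
    rw [hax v hv]
    exact hby _ (by rw [x.length_eq]; exact hv)
  inv_mem' := by
    intro a ha n
    obtain ⟨x, hx, hax⟩ := ha n
    refine ⟨x⁻¹, Γ.inv_mem hx, fun v hv => ?_⟩
    show a.toPerm.symm v = x.toPerm.symm v
    apply a.toPerm.injective
    rw [Equiv.apply_symm_apply]
    rw [hax (x.toPerm.symm v) (by rw [x.symm_length]; exact hv)]
    exact (Equiv.apply_symm_apply _ _).symm

/-- The action `π_n(g)` of `g` on the `n`-th level of the tree. -/
def lmap (n : ℕ) (g : TreeAut d) :
    {v : List (Fin d) // v.length = n} → {v : List (Fin d) // v.length = n} :=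
  fun v => ⟨g.toPerm v.1, by rw [g.length_eq]; exact v.2⟩

/-- The image `π_n(S)` of a set of tree automorphisms on the `n`-th level of the tree.
(An automorphism of the truncated tree `T^n` is uniquely determined by its action on the
`n`-th level, so this faithfully encodes the action on `T^n`.) -/
def levelImage (n : ℕ) (S : Set (TreeAut d)) :
    Set ({v : List (Fin d) // v.length = n} → {v : List (Fin d) // v.length = n}) :=
  lmap n '' S

/-- The proportion of elements of `π_n(S)` fixing some vertex at level `n`. -/
noncomputable def fixRatio (S : Set (TreeAut d)) (n : ℕ) : ℝ :=
  (Set.ncard {q ∈ levelImage n S | ∃ v, q v = v} : ℝ) / (Set.ncard (levelImage n S) : ℝ)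

/-- The fixed-point proportion
`FPP(S) = lim_n #{g ∈ π_n(S) : g fixes a vertex at level n} / |π_n(S)|`. -/
noncomputable def FPP (S : Set (TreeAut d)) : ℝ :=
  Filter.limUnder Filter.atTop (fixRatio S)

/-- The fixed-point process: `Xfix n g` is the number of vertices at level `n` fixed by `g`. -/
noncomputable def Xfix (n : ℕ) (g : TreeAut d) : ℕ :=
  Set.ncard {v : List (Fin d) | v.length = n ∧ g.toPerm v = v}

/-- The Hausdorff dimension of a (closed) subgroup of `Aut T`,
`hdim(S) = liminf_n log|π_n(S)| / log|π_n(Aut T)|`. -/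
noncomputable def hdim (S : Set (TreeAut d)) : ℝ :=
  Filter.liminf
    (fun n => Real.log (Set.ncard (levelImage n S)) /
      Real.log (Set.ncard (levelImage n (Set.univ : Set (TreeAut d)))))
    Filter.atTop

/-- The Haar measure (in the ambient closed group `G`) of the closure of a subset `S ⊆ G`:
for a closed subgroup `G ≤ Aut T` with Haar probability measure `μ_G` and a subset `S`
whose defining condition is closed, `μ_G(S) = lim_n |π_n(S)|/|π_n(G)| = inf_n |π_n(S)|/|π_n(G)|`
(the sequence is non-increasing). -/
noncomputable def relDensity (G S : Set (TreeAut d)) : ℝ :=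
  ⨅ n : ℕ, (Set.ncard (levelImage n S) : ℝ) / (Set.ncard (levelImage n G) : ℝ)

/-- The rigid vertex stabilizer `rist_S(v)`: elements of `S` fixing every vertex that is not
a descendant of `v`. -/
def ristS (S : Set (TreeAut d)) (v : List (Fin d)) : Set (TreeAut d) :=
  {g ∈ S | ∀ w : List (Fin d), ¬ v <+: w → g.toPerm w = w}

/-- The rigid level stabilizer `Rist_S(n)`: the product of the rigid vertex stabilizers of the
vertices at level `n`.  (An automorphism belongs to this product iff it fixes all vertices up
to level `n` and, below each vertex `v` of level `n`, it agrees with some element of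
`rist_S(v)`.) -/
def RistProd (S : Set (TreeAut d)) (n : ℕ) : Set (TreeAut d) :=
  {g ∈ S | (∀ w : List (Fin d), w.length ≤ n → g.toPerm w = w) ∧
    ∀ v : List (Fin d), v.length = n → ∃ h ∈ ristS S v, sect h v = sect g v}

/-- `R` has finite index in `S`: finitely many right cosets of `R` cover `S`. -/
def FiniteIndexIn (R S : Set (TreeAut d)) : Prop :=
  ∃ T : Finset (TreeAut d), ∀ g ∈ S, ∃ t ∈ T, ∃ r ∈ R, g = r * t

/-- A set of tree automorphisms is *branch* if it is level-transitive and all its rigid level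
stabilizers have finite index in it. -/
def BranchS (S : Set (TreeAut d)) : Prop :=
  LevelTrans S ∧ ∀ n : ℕ, 1 ≤ n → FiniteIndexIn (RistProd S n) S

/-- A closed level-transitive group `S` is of *finite type of depth `D`* if
`S = {g ∈ Aut T ∣ g|_v^D ∈ π_D(S) for all vertices v}`, where `g|_v^D = π_D(g|_v)` is the
depth-`D` section of `g` at `v`. -/
def FiniteType (S : Set (TreeAut d)) (D : ℕ) : Prop :=
  S = {g : TreeAut d | ∀ v : List (Fin d), lmap D (sect g v) ∈ levelImage D S}

/-- The set of right cosets `{H·g : g ∈ S}` (so its cardinality is the index `|S : H|`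
when `H ≤ S` are groups). -/
def rightCosets (H S : Set (TreeAut d)) : Set (Set (TreeAut d)) :=
  {C | ∃ g ∈ S, C = {x | ∃ h ∈ H, x = h * g}}

/-- The set of cosets `{π_D(H)·π_D(g) : g ∈ S}` of `π_D(H)` in `π_D(S)`. -/
def lvlCosets (D : ℕ) (H S : Set (TreeAut d)) :
    Set (Set ({v : List (Fin d) // v.length = D} → {v : List (Fin d) // v.length = D})) :=
  {C | ∃ g ∈ S, C = {q | ∃ h ∈ H, q = lmap D (h * g)}}

/-- The label of `g` at the root: the action `π_1(g)` of `g` on the first level. -/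
def rootLabel (g : TreeAut d) : Equiv.Perm (Fin d) := label g []

/-- The action `π_1(S)` of a set of tree automorphisms on the first level. -/
def rootImage (S : Set (TreeAut d)) : Set (Equiv.Perm (Fin d)) := rootLabel '' S

/-- The set of cosets of `π_1(H)` in `π_1(S)`, i.e. the quotient `Q = π_1(S)/π_1(H)`. -/
def rootCosets (H S : Set (TreeAut d)) : Set (Set (Equiv.Perm (Fin d))) :=
  {C | ∃ a ∈ rootImage S, C = {x | ∃ b ∈ rootImage H, x = b * a}}

/-- The level-`n` vertex of the end (infinite rooted path) `γ`. -/
def pathPrefix (γ : ℕ → Fin d) (n : ℕ) : List (Fin d) :=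
  List.ofFn (fun k : Fin n => γ k)

end Predicates


/-! ### Arboreal Galois representations

Let `K` be a field, `t` a transcendental element over `K` (we model `K(t)` as `RatFunc K`
with `t = RatFunc.X`), and fix an algebraic closure `Ω` of `K(t)`; the separable closure
`K(t)^sep ⊆ Ω` has the same automorphism group over `K(t)`, acting in the same way on the
(separable) preimage trees, so we work with `Gal = Ω ≃ₐ[K(t)] Ω`.

A rational function `f = P/Q ∈ K(z)` of degree `d = max(deg P, deg Q) ≥ 2` (with `P, Q`
coprime) is encoded by the pair `(P, Q)`; a point `y ∈ Ω` is a preimage of `x ∈ Ω` when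
`P(y) = x·Q(y)` (by coprimality this forces `Q(y) ≠ 0`).

The preimage tree `T = ⊔_n f^{-n}(t)` is encoded by an embedding
`ι : List (Fin d) → Ω` of the `d`-adic tree, with root `ι [] = t`, sending the immediate
descendants of `v` bijectively onto `f^{-1}(ι v)`; the hypothesis that such an embedding
exists expresses that the preimage tree is `d`-adic.  The arboreal Galois representation is
a map `ρ : Gal → Aut T` intertwining `ι` (which determines it uniquely); the arithmetic
iterated Galois group `G_∞(K,f,t)` is `Set.range ρ`, and the iterated Galois group over an
algebraic base field extension `L` of `K` is the image under `ρ` of the automorphisms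
fixing `L` pointwise. -/

section ArbGaloisDefs

variable {d : ℕ} (K : Type*) [Field K]

/-- The subgroup (as a set) of `Gal(Ω/K(t))` of the automorphisms fixing the separable
closure `K^sep` of `K` (inside `Ω`) pointwise; its image under `ρ` is the geometric
iterated Galois group `G_∞(K^sep, f, t)`. -/
def sepFixing : Set (AlgebraicClosure (RatFunc K) ≃ₐ[RatFunc K] AlgebraicClosure (RatFunc K)) :=
  {σ | ∀ x : AlgebraicClosure (RatFunc K),
    x ∈ separableClosure K (AlgebraicClosure (RatFunc K)) → σ x = x}

/-- `K_n(f,t)`: the splitting field over `K(t)` of the first `n` iterates of `f`, i.e. the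
subfield of `Ω` generated over `K(t)` by the vertices of the preimage tree of level `≤ n`. -/
noncomputable def iterSplit (ι : List (Fin d) → AlgebraicClosure (RatFunc K)) (n : ℕ) :
    IntermediateField (RatFunc K) (AlgebraicClosure (RatFunc K)) :=
  IntermediateField.adjoin (RatFunc K) (ι '' {v : List (Fin d) | v.length ≤ n})

/-- `K_∞(f,t)`: the splitting field over `K(t)` of all the iterates of `f`. -/
noncomputable def iterSplitInf (ι : List (Fin d) → AlgebraicClosure (RatFunc K)) :
    IntermediateField (RatFunc K) (AlgebraicClosure (RatFunc K)) :=
  IntermediateField.adjoin (RatFunc K) (Set.range ι)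

/-- The automorphisms of `Ω/K(t)` fixing `L_n := K^sep ∩ K_n(f,t)` pointwise; the image of
this set under `ρ` is `G_∞(L_n, f, t)`. -/
def LnFixing (ι : List (Fin d) → AlgebraicClosure (RatFunc K)) (n : ℕ) :
    Set (AlgebraicClosure (RatFunc K) ≃ₐ[RatFunc K] AlgebraicClosure (RatFunc K)) :=
  {σ | ∀ x : AlgebraicClosure (RatFunc K),
    x ∈ separableClosure K (AlgebraicClosure (RatFunc K)) → x ∈ iterSplit K ι n → σ x = x}

/-- The automorphisms of `Ω/K(t)` fixing `L_∞ := K^sep ∩ K_∞(f,t)` pointwise; the image of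
this set under `ρ` is `G_∞(L_∞, f, t)`. -/
def LinfFixing (ι : List (Fin d) → AlgebraicClosure (RatFunc K)) :
    Set (AlgebraicClosure (RatFunc K) ≃ₐ[RatFunc K] AlgebraicClosure (RatFunc K)) :=
  {σ | ∀ x : AlgebraicClosure (RatFunc K),
    x ∈ separableClosure K (AlgebraicClosure (RatFunc K)) → x ∈ iterSplitInf K ι → σ x = x}

end ArbGaloisDefs

set_option synthInstance.maxHeartbeats 400000
set_option maxHeartbeats 1600000
/-! ### Auxiliary lemmas -/

namespace BadMono

open TreeAut

variable {d : ℕ}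

lemma tp_nil (g : TreeAut d) : g.toPerm [] = [] :=
  List.length_eq_zero_iff.mp (g.length_eq [])

lemma tp_singleton (g : TreeAut d) (i : Fin d) :
    g.toPerm [i] = [rootLabel g i] := by
  have h := apply_concat g [] i
  simpa [tp_nil, rootLabel] using h

lemma rootLabel_mul (g h : TreeAut d) :
    rootLabel (g * h) = rootLabel h * rootLabel g := by
  apply Equiv.ext
  intro i
  have h1 : (g * h).toPerm [i] = [rootLabel (g * h) i] := tp_singleton _ i
  have h2 : (g * h).toPerm [i] = h.toPerm (g.toPerm [i]) := rfl
  rw [tp_singleton g i, tp_singleton h _] at h2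
  rw [h1] at h2
  rw [Equiv.Perm.mul_apply]
  exact List.head_eq_of_cons_eq h2

lemma rootLabel_one : rootLabel (1 : TreeAut d) = 1 := by
  apply Equiv.ext
  intro i
  have h1 : (1 : TreeAut d).toPerm [i] = [rootLabel (1 : TreeAut d) i] := tp_singleton _ i
  have h2 : (1 : TreeAut d).toPerm [i] = [i] := rfl
  rw [h1] at h2
  rw [Equiv.Perm.one_apply]
  exact (List.head_eq_of_cons_eq h2)

lemma prefix_eq_prefix {α : Type*} {l₁ l₂ L : List α} (h₁ : l₁ <+: L) (h₂ : l₂ <+: L)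
    (h : l₁.length = l₂.length) : l₁ = l₂ := by
  rw [List.prefix_iff_eq_take.mp h₁, List.prefix_iff_eq_take.mp h₂, h]

lemma fix_take (g : TreeAut d) {v : List (Fin d)} (h : g.toPerm v = v) (k : ℕ) :
    g.toPerm (v.take k) = v.take k := by
  have h1 : g.toPerm (v.take k) <+: v := by
    have := g.prefix_mono (v.take k) v (List.take_prefix _ _)
    rwa [h] at this
  have h2 : v.take k <+: v := List.take_prefix _ _
  exact prefix_eq_prefix h1 h2 (by rw [g.length_eq])

lemma fix_concat (g : TreeAut d) {v : List (Fin d)} {i : Fin d} (h : g.toPerm v = v)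
    (hl : label g v i = i) : g.toPerm (v ++ [i]) = v ++ [i] := by
  rw [apply_concat, h, hl]

lemma lmap_mul (n : ℕ) (g h : TreeAut d) : lmap n (g * h) = lmap n h ∘ lmap n g := by
  funext v; exact Subtype.ext rfl

lemma lmap_one (n : ℕ) : lmap n (1 : TreeAut d) = id := by
  funext v; exact Subtype.ext rfl

lemma lmap_injective (n : ℕ) (g : TreeAut d) : Function.Injective (lmap n g) := by
  intro a b h
  exact Subtype.ext (g.toPerm.injective (congrArg Subtype.val h))

lemma lmap_agree (i0 : Fin d) {n : ℕ} {g h : TreeAut d} (H : lmap n g = lmap n h)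
    {v : List (Fin d)} (hv : v.length ≤ n) : g.toPerm v = h.toPerm v := by
  set w : List (Fin d) := v ++ List.replicate (n - v.length) i0 with hw
  have hwlen : w.length = n := by simp [hw]; omega
  have hvw : v <+: w := List.prefix_append _ _
  have h1 := congrArg Subtype.val (congrFun H ⟨w, hwlen⟩)
  have h2 : g.toPerm v <+: g.toPerm w := g.prefix_mono _ _ hvw
  have h3 : h.toPerm v <+: h.toPerm w := h.prefix_mono _ _ hvw
  have h4 : (lmap n g ⟨w, hwlen⟩ : {v : List (Fin d) // v.length = n}).1 = g.toPerm w := rfl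
  rw [h4] at h1
  have h5 : (lmap n h ⟨w, hwlen⟩ : {v : List (Fin d) // v.length = n}).1 = h.toPerm w := rfl
  rw [h5] at h1
  rw [h1] at h2
  exact prefix_eq_prefix h2 h3 (by rw [g.length_eq, h.length_eq])

lemma rootLabel_of_lmap (i0 : Fin d) {n : ℕ} {g h : TreeAut d} (hn : 1 ≤ n)
    (H : lmap n g = lmap n h) : rootLabel g = rootLabel h := by
  apply Equiv.ext
  intro i
  have h1 : g.toPerm [i] = h.toPerm [i] := lmap_agree i0 H (by simpa using hn)
  rw [tp_singleton g i, tp_singleton h i] at h1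
  exact List.head_eq_of_cons_eq h1

instance vtxFinite (n : ℕ) : Finite {v : List (Fin d) // v.length = n} := by
  exact Finite.of_injective (fun v => (v.1.get ∘ (Fin.cast v.2.symm) : Fin n → Fin d))
    (by intro a b h; apply Subtype.ext; apply List.ext_get (a.2.trans b.2.symm)
        intro i h1 h2; exact congrFun h ⟨i, a.2 ▸ h1⟩)

/-- the restriction of a level-`(n+1)` action to level `n` -/
def restrict (i0 : Fin d) (n : ℕ)
    (q : {v : List (Fin d) // v.length = n + 1} → {v : List (Fin d) // v.length = n + 1}) :
    {v : List (Fin d) // v.length = n} → {v : List (Fin d) // v.length = n} :=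
  fun v => ⟨(q ⟨v.1 ++ [i0], by simp [v.2]⟩).1.take n,
    by rw [List.length_take, (q _).2]; omega⟩

lemma restrict_lmap (i0 : Fin d) (n : ℕ) (g : TreeAut d) :
    restrict i0 n (lmap (n + 1) g) = lmap n g := by
  funext v
  apply Subtype.ext
  show (g.toPerm (v.1 ++ [i0])).take n = g.toPerm v.1
  have h2 : g.toPerm v.1 <+: g.toPerm (v.1 ++ [i0]) :=
    g.prefix_mono _ _ (List.prefix_append _ _)
  have h3 : (g.toPerm v.1).length = n := by rw [g.length_eq]; exact v.2
  conv_rhs => rw [List.prefix_iff_eq_take.mp h2]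
  rw [h3]

lemma card_filter_mem_of_const_fibers {β γ : Type*} [DecidableEq β] [DecidableEq γ]
    (Λ : Finset β) (r : β → γ) (k : ℕ)
    (hk : ∀ y ∈ Λ.image r, (Λ.filter (fun q => r q = y)).card = k)
    (T : Finset γ) (hT : T ⊆ Λ.image r) :
    (Λ.filter (fun q => r q ∈ T)).card = T.card * k := by
  have hU : Λ.filter (fun q => r q ∈ T) = T.biUnion (fun y => Λ.filter fun q => r q = y) := by
    ext q
    simp only [Finset.mem_filter, Finset.mem_biUnion]
    constructor
    · rintro ⟨hq, hrq⟩; exact ⟨r q, hrq, hq, rfl⟩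
    · rintro ⟨y, hy, hq, rfl⟩; exact ⟨hq, hy⟩
  rw [hU, Finset.card_biUnion]
  · rw [Finset.sum_congr rfl (fun y hy => hk y (hT hy)), Finset.sum_const, smul_eq_mul]
  · intro y hy z hz hyz
    apply Finset.disjoint_filter_filter'
    exact Set.disjoint_left.mpr (by rintro q rfl; exact hyz)

lemma rep_eq {Ω : Type*} (ι : List (Fin d) → Ω)
    (hinj : ∀ v w : List (Fin d), v.length = w.length → ι v = ι w → v = w)
    {g h : TreeAut d} (H : ∀ v, ι (g.toPerm v) = ι (h.toPerm v)) : g = h :=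
  TreeAut.toPerm_injective (Equiv.ext fun v =>
    hinj _ _ (by rw [g.length_eq, h.length_eq]) (H v))

end BadMono
namespace BadMono

open TreeAut

variable {d : ℕ}

lemma rootLabel_inv (g : TreeAut d) : rootLabel g⁻¹ = (rootLabel g)⁻¹ := by
  have h : rootLabel g⁻¹ * rootLabel g = 1 := by
    rw [← rootLabel_mul, mul_inv_cancel, rootLabel_one]
  exact eq_inv_of_mul_eq_one_left h

lemma rep_mul {Ω : Type*} (ι : List (Fin d) → Ω)
    (hinj : ∀ v w : List (Fin d), v.length = w.length → ι v = ι w → v = w)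
    {g h gh : TreeAut d} {s s' : Ω → Ω}
    (hg : ∀ v, ι (g.toPerm v) = s (ι v)) (hh : ∀ v, ι (h.toPerm v) = s' (ι v))
    (hgh : ∀ v, ι (gh.toPerm v) = s' (s (ι v))) : g * h = gh :=
  rep_eq ι hinj (fun v => by
    show ι (h.toPerm (g.toPerm v)) = ι (gh.toPerm v)
    rw [hh, hg, hgh])

lemma rep_one {Ω : Type*} (ι : List (Fin d) → Ω)
    (hinj : ∀ v w : List (Fin d), v.length = w.length → ι v = ι w → v = w)
    {g : TreeAut d} (hg : ∀ v, ι (g.toPerm v) = ι v) : g = 1 :=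
  rep_eq ι hinj (fun v => hg v)

end BadMono
namespace BadMono

section Core

open Polynomial

variable {d : ℕ} {K : Type*} [Field K]

local notation "Ω" => AlgebraicClosure (RatFunc K)

lemma aevalQ_ne_zero (P Q : K[X]) (hPQ : IsCoprime P Q) {y x : Ω}
    (hc : aeval y P = x * aeval y Q) : aeval y Q ≠ 0 := by
  intro h0
  obtain ⟨a, b, hab⟩ := hPQ
  have h1 : aeval y (a * P + b * Q) = 1 := by rw [hab]; simp
  rw [map_add, map_mul, map_mul, h0, hc, h0] at h1
  simp at h1

lemma anc_eq (P Q : K[X]) (hPQ : IsCoprime P Q) {y x : Ω}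
    (hc : aeval y P = x * aeval y Q) :
    x = aeval y P * (aeval y Q)⁻¹ := by
  rw [hc, mul_assoc, mul_inv_cancel₀ (aevalQ_ne_zero P Q hPQ hc), mul_one]

lemma isIntegral_aeval {y : Ω} (h : IsIntegral K y) (p : K[X]) :
    IsIntegral K (aeval y p) := by
  apply IsIntegral.of_mem_of_fg (Algebra.adjoin K {y}) h.fg_adjoin_singleton
  rw [Algebra.adjoin_singleton_eq_range_aeval]
  exact ⟨p, rfl⟩

lemma trans_iota (P Q : K[X]) (hPQ : IsCoprime P Q)
    (ι : List (Fin d) → Ω)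
    (hroot : ι [] = algebraMap (RatFunc K) Ω RatFunc.X)
    (hchild : ∀ (v : List (Fin d)) (i : Fin d),
      aeval (ι (v ++ [i])) P = ι v * aeval (ι (v ++ [i])) Q) :
    ∀ v, Transcendental K (ι v) := by
  intro v
  induction v using List.reverseRecOn with
  | nil =>
      rw [hroot]
      rw [transcendental_algebraMap_iff (algebraMap (RatFunc K) Ω).injective]
      rw [← RatFunc.algebraMap_X]
      rw [transcendental_algebraMap_iff (IsFractionRing.injective (Polynomial K) (RatFunc K))]
      exact Polynomial.transcendental_X K
  | append_singleton v i ih =>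
      intro halg
      refine ih ?_
      have hy := hchild v i
      have hyint : IsIntegral K (ι (v ++ [i])) := isAlgebraic_iff_isIntegral.mp halg
      have h1 : IsIntegral K (aeval (ι (v ++ [i])) P) := isIntegral_aeval hyint P
      have h2 : IsIntegral K (aeval (ι (v ++ [i])) Q) := isIntegral_aeval hyint Q
      have h4 : IsIntegral K ((aeval (ι (v ++ [i])) Q)⁻¹) :=
        isAlgebraic_iff_isIntegral.mp h2.isAlgebraic.inv
      have h5 : IsIntegral K (ι v) := by
        rw [anc_eq P Q hPQ hy]; exact h1.mul h4
      exact h5.isAlgebraic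

lemma trans_sep {z : Ω} (h : Transcendental K z) :
    Transcendental (separableClosure K Ω) z := by
  intro halg
  apply h
  haveI : Algebra.IsIntegral K (separableClosure K Ω) := Algebra.IsAlgebraic.isIntegral
  have h1 : IsIntegral (separableClosure K Ω) z := isAlgebraic_iff_isIntegral.mp halg
  exact (isIntegral_trans z h1).isAlgebraic

lemma sep_map (σ : Ω ≃ₐ[RatFunc K] Ω) {x : Ω}
    (hx : x ∈ separableClosure K Ω) : σ x ∈ separableClosure K Ω := by
  rw [mem_separableClosure_iff] at hx ⊢
  have h : σ x = (σ.restrictScalars K) x := rfl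
  rw [h]
  unfold IsSeparable at hx ⊢
  rwa [minpoly.algEquiv_eq]

/-- The `A`-algebra embedding `RatFunc A → Ω` sending `X` to a transcendental `z`. -/
noncomputable def rfHom (z : Ω) (hz : Transcendental (separableClosure K Ω) z) :
    RatFunc (separableClosure K Ω) →ₐ[separableClosure K Ω] Ω :=
  RatFunc.liftAlgHom (aeval z) (fun p hp => by
    rw [Submonoid.mem_comap, mem_nonZeroDivisors_iff_ne_zero]
    rw [mem_nonZeroDivisors_iff_ne_zero] at hp
    exact fun h0 => hp (transcendental_iff.mp hz p h0))

lemma rfHom_algebraMap (z : Ω) (hz : Transcendental (separableClosure K Ω) z)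
    (p : (separableClosure K Ω)[X]) :
    rfHom z hz (algebraMap ((separableClosure K Ω)[X]) (RatFunc (separableClosure K Ω)) p) = aeval z p := by
  have h := RatFunc.liftAlgHom_apply_div (K := (separableClosure K Ω)) (L := AlgebraicClosure (RatFunc K)) (S := (separableClosure K Ω)) (aeval z) (fun p hp => by
    rw [Submonoid.mem_comap, mem_nonZeroDivisors_iff_ne_zero]
    rw [mem_nonZeroDivisors_iff_ne_zero] at hp
    exact fun h0 => hp (transcendental_iff.mp hz p h0)) p 1
  simpa [rfHom] using h

lemma rfHom_X (z : Ω) (hz : Transcendental (separableClosure K Ω) z) :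
    rfHom z hz RatFunc.X = z := by
  rw [← RatFunc.algebraMap_X, rfHom_algebraMap, aeval_X]

lemma range_inv_mem (z : Ω) (hz : Transcendental (separableClosure K Ω) z)
    {u : Ω} (hu : u ∈ (rfHom z hz).range) : u⁻¹ ∈ (rfHom z hz).range := by
  obtain ⟨r, rfl⟩ := hu
  exact ⟨r⁻¹, map_inv₀ (rfHom z hz) r⟩

lemma aeval_mem (S : Subalgebra (separableClosure K Ω) Ω) {y : Ω} (hy : y ∈ S)
    (p : K[X]) : aeval y p ∈ S := by
  rw [Polynomial.aeval_def, Polynomial.eval₂_eq_sum, Polynomial.sum_def]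
  apply Subalgebra.sum_mem
  intro k _
  apply Subalgebra.mul_mem
  · have h : algebraMap K Ω (p.coeff k) =
        algebraMap (separableClosure K Ω) Ω (algebraMap K (separableClosure K Ω) (p.coeff k)) := by
      rw [← IsScalarTower.algebraMap_apply]
    rw [h]
    exact Subalgebra.algebraMap_mem S _
  · exact Subalgebra.pow_mem S hy k

end Core

end BadMono
namespace BadMono

section Core2

open Polynomial

variable {d : ℕ} {K : Type*} [Field K]

local notation "Ω" => AlgebraicClosure (RatFunc K)

lemma nil_mem_range (P Q : K[X]) (hPQ : IsCoprime P Q)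
    (ι : List (Fin d) → Ω)
    (hchild : ∀ (v : List (Fin d)) (i : Fin d),
      aeval (ι (v ++ [i])) P = ι v * aeval (ι (v ++ [i])) Q)
    (z : Ω) (hz : Transcendental (separableClosure K Ω) z)
    (w : List (Fin d)) (h : ι w ∈ (rfHom z hz).range) : ι [] ∈ (rfHom z hz).range := by
  induction w using List.reverseRecOn with
  | nil => exact h
  | append_singleton v i ih =>
      apply ih
      rw [anc_eq P Q hPQ (hchild v i)]
      exact Subalgebra.mul_mem _ (aeval_mem _ h P) (range_inv_mem z hz (aeval_mem _ h Q))

lemma algebraMap_poly (p : K[X]) :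
    algebraMap (RatFunc K) Ω (algebraMap (Polynomial K) (RatFunc K) p)
      = aeval (algebraMap (RatFunc K) Ω RatFunc.X) p := by
  have h1 : Polynomial.aeval (RatFunc.X : RatFunc K) p = algebraMap (Polynomial K) (RatFunc K) p := by
    have h := Polynomial.aeval_algHom_apply
      (IsScalarTower.toAlgHom K (Polynomial K) (RatFunc K)) Polynomial.X p
    rw [Polynomial.aeval_X_left_apply] at h
    simpa [IsScalarTower.coe_toAlgHom', RatFunc.algebraMap_X] using h
  rw [← h1]
  have h2 := Polynomial.aeval_algHom_apply (IsScalarTower.toAlgHom K (RatFunc K) Ω)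
    RatFunc.X p
  simpa [IsScalarTower.coe_toAlgHom'] using h2.symm

lemma ratfunc_mem_range (ι : List (Fin d) → Ω)
    (hroot : ι [] = algebraMap (RatFunc K) Ω RatFunc.X)
    (z : Ω) (hz : Transcendental (separableClosure K Ω) z)
    (h0 : ι [] ∈ (rfHom z hz).range) (r : RatFunc K) :
    algebraMap (RatFunc K) Ω r ∈ (rfHom z hz).range := by
  rw [← RatFunc.num_div_denom r, map_div₀, div_eq_mul_inv]
  have hp : ∀ p : K[X], algebraMap (RatFunc K) Ω (algebraMap (Polynomial K) (RatFunc K) p)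
      ∈ (rfHom z hz).range := by
    intro p
    rw [algebraMap_poly, ← hroot]
    exact aeval_mem _ h0 p
  exact Subalgebra.mul_mem _ (hp _) (range_inv_mem z hz (hp _))

lemma isAlgebraic_over_range (z : Ω) (hz : Transcendental (separableClosure K Ω) z)
    (hS : ∀ r : RatFunc K, algebraMap (RatFunc K) Ω r ∈ (rfHom z hz).range) :
    Algebra.IsAlgebraic (↥(rfHom z hz).range) Ω := by
  constructor
  intro ω
  have h2 : IsIntegral (RatFunc K) ω :=
    isAlgebraic_iff_isIntegral.mp (Algebra.IsAlgebraic.isAlgebraic ω)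
  obtain ⟨p, hmonic, heval⟩ := h2
  let u : RatFunc K →+* (↥(rfHom z hz).range) := {
    toFun := fun r => ⟨algebraMap (RatFunc K) Ω r, hS r⟩
    map_one' := by apply Subtype.ext; simp
    map_mul' := fun a b => by apply Subtype.ext; simp
    map_zero' := by apply Subtype.ext; simp
    map_add' := fun a b => by apply Subtype.ext; simp }
  haveI : Nontrivial (↥(rfHom z hz).range) :=
    ⟨⟨0, 1, fun hc => by simpa using congrArg Subtype.val hc⟩⟩
  refine ⟨p.map u, (hmonic.map u).ne_zero, ?_⟩
  rw [Polynomial.aeval_def, Polynomial.eval₂_map]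
  have hcomp : (algebraMap (↥(rfHom z hz).range) Ω).comp u = algebraMap (RatFunc K) Ω :=
    RingHom.ext fun r => rfl
  rw [hcomp]
  exact heval

lemma core_equiv (P Q : K[X]) (hPQ : IsCoprime P Q)
    (ι : List (Fin d) → Ω)
    (hroot : ι [] = algebraMap (RatFunc K) Ω RatFunc.X)
    (hchild : ∀ (v : List (Fin d)) (i : Fin d),
      aeval (ι (v ++ [i])) P = ι v * aeval (ι (v ++ [i])) Q)
    (hinj : ∀ v w : List (Fin d), v.length = w.length → ι v = ι w → v = w)
    (hsurj : ∀ (v : List (Fin d)) (y : Ω),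
      aeval y P = ι v * aeval y Q → ∃ i : Fin d, y = ι (v ++ [i]))
    (w : List (Fin d)) :
    ∃ (φ : Ω ≃+* Ω) (π : Equiv.Perm (Fin d)),
      (∀ x ∈ separableClosure K Ω, φ x = x) ∧
      φ (ι []) = ι w ∧ ∀ i : Fin d, φ (ι [i]) = ι (w ++ [π i]) := by
  have hz1 : Transcendental (separableClosure K Ω) (ι []) :=
    trans_sep (trans_iota P Q hPQ ι hroot hchild [])
  have hz2 : Transcendental (separableClosure K Ω) (ι w) :=
    trans_sep (trans_iota P Q hPQ ι hroot hchild w)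
  set e₁ := rfHom (ι []) hz1 with he₁
  set e₂ := rfHom (ι w) hz2 with he₂
  have h0₁ : ι [] ∈ e₁.range := ⟨RatFunc.X, rfHom_X _ _⟩
  have h0₂ : ι [] ∈ e₂.range :=
    nil_mem_range P Q hPQ ι hchild _ hz2 w ⟨RatFunc.X, rfHom_X _ _⟩
  haveI halg₁ : Algebra.IsAlgebraic (↥e₁.range) Ω :=
    isAlgebraic_over_range _ hz1 (ratfunc_mem_range ι hroot _ hz1 h0₁)
  haveI halg₂ : Algebra.IsAlgebraic (↥e₂.range) Ω :=
    isAlgebraic_over_range _ hz2 (ratfunc_mem_range ι hroot _ hz2 h0₂)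
  haveI : NoZeroSMulDivisors (↥e₁.range) Ω :=
    ⟨fun {c x} h => by rw [Algebra.smul_def, mul_eq_zero] at h; exact h.imp_left (fun h' => Subtype.ext h')⟩
  haveI : NoZeroSMulDivisors (↥e₂.range) Ω :=
    ⟨fun {c x} h => by rw [Algebra.smul_def, mul_eq_zero] at h; exact h.imp_left (fun h' => Subtype.ext h')⟩
  haveI : IsAlgClosure (↥e₁.range) Ω := ⟨inferInstance, halg₁⟩
  haveI : IsAlgClosure (↥e₂.range) Ω := ⟨inferInstance, halg₂⟩
  set iso₁ := AlgEquiv.ofInjectiveField e₁ with hiso₁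
  set iso₂ := AlgEquiv.ofInjectiveField e₂ with hiso₂
  set eE : (↥e₁.range) ≃+* (↥e₂.range) := (iso₁.symm.trans iso₂).toRingEquiv with heE
  set φ := IsAlgClosure.equivOfEquiv Ω Ω eE with hφ
  have hφe : ∀ r : RatFunc (separableClosure K Ω), φ (e₁ r) = e₂ r := by
    intro r
    have h1 : e₁ r = algebraMap (↥e₁.range) Ω (iso₁ r) :=
      (AlgEquiv.ofInjective_apply e₁ e₁.toRingHom.injective r).symm
    rw [h1, hφ, IsAlgClosure.equivOfEquiv_algebraMap]
    have h2 : eE (iso₁ r) = iso₂ r := by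
      show (iso₁.symm.trans iso₂) (iso₁ r) = iso₂ r
      rw [AlgEquiv.trans_apply, AlgEquiv.symm_apply_apply]
    rw [h2]
    exact AlgEquiv.ofInjective_apply e₂ e₂.toRingHom.injective r
  have hfixA : ∀ x ∈ separableClosure K Ω, φ x = x := by
    intro x hx
    have h1 : e₁ (algebraMap (separableClosure K Ω) (RatFunc (separableClosure K Ω)) ⟨x, hx⟩)
        = x := by rw [AlgHom.commutes]; rfl
    have h2 : e₂ (algebraMap (separableClosure K Ω) (RatFunc (separableClosure K Ω)) ⟨x, hx⟩)
        = x := by rw [AlgHom.commutes]; rfl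
    conv_lhs => rw [← h1]
    rw [hφe, h2]
  have hroot' : φ (ι []) = ι w := by
    have h1 : e₁ RatFunc.X = ι [] := rfHom_X _ _
    have h2 : e₂ RatFunc.X = ι w := rfHom_X _ _
    rw [← h1, hφe, h2]
  have haev : ∀ (y : Ω) (p : K[X]), φ (aeval y p) = aeval (φ y) p := by
    intro y p
    have hcomp : (φ : Ω →+* Ω).comp (algebraMap K Ω) = algebraMap K Ω :=
      RingHom.ext fun k => hfixA _ (IntermediateField.algebraMap_mem (separableClosure K Ω) k)
    have h := Polynomial.hom_eval₂ p (algebraMap K Ω) (φ : Ω →+* Ω) y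
    rw [hcomp] at h
    rw [Polynomial.aeval_def, Polynomial.aeval_def]
    exact h
  have hmap : ∀ i : Fin d, ∃ j : Fin d, φ (ι [i]) = ι (w ++ [j]) := by
    intro i
    apply hsurj w (φ (ι [i]))
    have hc := hchild [] i
    rw [List.nil_append] at hc
    have hc2 := congrArg φ hc
    rw [map_mul, haev, haev, hroot'] at hc2
    exact hc2
  choose jmap hjmap using hmap
  have hjinj : Function.Injective jmap := by
    intro a b hab
    have h1 : φ (ι [a]) = φ (ι [b]) := by rw [hjmap a, hjmap b, hab]
    have h3 : [a] = [b] := hinj _ _ rfl (φ.injective h1)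
    simpa using h3
  exact ⟨φ, Equiv.ofBijective jmap (Finite.injective_iff_bijective.mp hjinj), hfixA, hroot',
    fun i => hjmap i⟩

end Core2

end BadMono
namespace BadMono

section FLL

open Polynomial TreeAut

variable {d : ℕ} {K : Type*} [Field K]

local notation "Ω" => AlgebraicClosure (RatFunc K)

lemma label_conj (P Q : K[X]) (hPQ : IsCoprime P Q)
    (ι : List (Fin d) → Ω)
    (hroot : ι [] = algebraMap (RatFunc K) Ω RatFunc.X)
    (hchild : ∀ (v : List (Fin d)) (i : Fin d),
      aeval (ι (v ++ [i])) P = ι v * aeval (ι (v ++ [i])) Q)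
    (hinj : ∀ v w : List (Fin d), v.length = w.length → ι v = ι w → v = w)
    (hsurj : ∀ (v : List (Fin d)) (y : Ω),
      aeval y P = ι v * aeval y Q → ∃ i : Fin d, y = ι (v ++ [i]))
    (ρ : (Ω ≃ₐ[RatFunc K] Ω) → TreeAut d)
    (hρ : ∀ σ (v : List (Fin d)), ι ((ρ σ).toPerm v) = σ (ι v))
    (τ : Ω ≃ₐ[RatFunc K] Ω) (w : List (Fin d)) (hfixw : (ρ τ).toPerm w = w) :
    ∃ s ∈ sepFixing K, ∃ π : Equiv.Perm (Fin d),
      label (ρ τ) w = π * (rootLabel (ρ s) * rootLabel (ρ τ)) * π⁻¹ := by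
  have hτw : τ (ι w) = ι w := by rw [← hρ τ w, hfixw]
  obtain ⟨φ, π, hφA, hφroot, hφlvl⟩ := core_equiv P Q hPQ ι hroot hchild hinj hsurj w
  have hφA' : ∀ x ∈ separableClosure K Ω, φ.symm x = x := by
    intro x hx
    conv_lhs => rw [← hφA x hx]
    exact φ.symm_apply_apply x
  have hφsymm : ∀ j, φ.symm (ι (w ++ [j])) = ι [π.symm j] := by
    intro j
    have h := hφlvl (π.symm j)
    rw [Equiv.apply_symm_apply] at h
    rw [← h, φ.symm_apply_apply]
  set τE : Ω ≃+* Ω := (φ.trans τ.toRingEquiv).trans φ.symm with hτE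
  have hτEapp : ∀ x, τE x = φ.symm (τ (φ x)) := fun x => rfl
  have hφsymmroot : φ.symm (ι w) = ι [] := by
    rw [← hφroot, φ.symm_apply_apply]
  have hcomm : ∀ r : RatFunc K,
      τE (algebraMap (RatFunc K) Ω r) = algebraMap (RatFunc K) Ω r := by
    have hhom : ((τE : Ω →+* Ω).comp (algebraMap (RatFunc K) Ω)).comp
          (algebraMap (Polynomial K) (RatFunc K))
        = (algebraMap (RatFunc K) Ω).comp (algebraMap (Polynomial K) (RatFunc K)) := by
      refine Polynomial.ringHom_ext (fun a => ?_) ?_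
      · have hka : (algebraMap (RatFunc K) Ω) ((algebraMap (Polynomial K) (RatFunc K))
            (Polynomial.C a)) = algebraMap K Ω a := by
          rw [← Polynomial.algebraMap_eq, ← IsScalarTower.algebraMap_apply,
            ← IsScalarTower.algebraMap_apply]
        show τE ((algebraMap (RatFunc K) Ω) ((algebraMap (Polynomial K) (RatFunc K))
          (Polynomial.C a))) = _
        rw [hka]
        have hmem : algebraMap K Ω a ∈ separableClosure K Ω :=
          IntermediateField.algebraMap_mem _ a
        have hτfix : τ (algebraMap K Ω a) = algebraMap K Ω a := by
          rw [IsScalarTower.algebraMap_apply K (RatFunc K) Ω]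
          exact τ.commutes _
        rw [hτEapp, hφA _ hmem, hτfix, hφA' _ hmem, RingHom.comp_apply, hka]
      · show τE ((algebraMap (RatFunc K) Ω) ((algebraMap (Polynomial K) (RatFunc K))
          Polynomial.X)) = _
        rw [RatFunc.algebraMap_X, ← hroot, hτEapp, hφroot, hτw, hφsymmroot,
          RingHom.comp_apply, RatFunc.algebraMap_X, ← hroot]
    intro r
    have h := IsLocalization.ringHom_ext (nonZeroDivisors (Polynomial K)) hhom
    exact RingHom.congr_fun h r
  set τ₁ : Ω ≃ₐ[RatFunc K] Ω := AlgEquiv.ofRingEquiv (f := τE) hcomm with hτ₁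
  have hτ₁app : ∀ x, τ₁ x = φ.symm (τ (φ x)) := fun x => rfl
  set s : Ω ≃ₐ[RatFunc K] Ω := τ.symm.trans τ₁ with hs
  have hsmem : s ∈ sepFixing K := by
    intro x hx
    have h1 : τ.symm x ∈ separableClosure K Ω := sep_map τ.symm hx
    show τ₁ (τ.symm x) = x
    rw [hτ₁app, hφA _ h1, τ.apply_symm_apply, hφA' _ hx]
  have hts : τ.trans s = τ₁ := by
    apply AlgEquiv.ext; intro x
    show τ₁ (τ.symm (τ x)) = τ₁ x
    rw [τ.symm_apply_apply]
  have hlvl1 : ∀ i : Fin d, (ρ τ₁).toPerm [i] = [π.symm (label (ρ τ) w (π i))] := by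
    intro i
    refine hinj _ _ (by rw [(ρ τ₁).length_eq]; rfl) ?_
    rw [hρ τ₁ [i], hτ₁app, hφlvl i]
    have h3 : τ (ι (w ++ [π i])) = ι (w ++ [label (ρ τ) w (π i)]) := by
      rw [← hρ τ (w ++ [π i]), apply_concat, hfixw]
    rw [h3, hφsymm]
  have hrl : ∀ i, rootLabel (ρ τ₁) i = π.symm (label (ρ τ) w (π i)) := by
    intro i
    have h4 := tp_singleton (ρ τ₁) i
    rw [hlvl1 i] at h4
    exact List.head_eq_of_cons_eq h4.symm
  refine ⟨s, hsmem, π, ?_⟩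
  have hmul : ρ τ * ρ s = ρ τ₁ := by
    apply rep_mul ι hinj (hρ τ) (hρ s)
    intro v
    rw [hρ τ₁ v, ← hts]
    rfl
  have hrlmul : rootLabel (ρ τ₁) = rootLabel (ρ s) * rootLabel (ρ τ) := by
    rw [← hmul, rootLabel_mul]
  rw [← hrlmul]
  apply Equiv.ext
  intro j
  show label (ρ τ) w j = (π * rootLabel (ρ τ₁) * π⁻¹) j
  rw [Equiv.Perm.mul_apply, Equiv.Perm.mul_apply]
  have hinvj : (π⁻¹ : Equiv.Perm (Fin d)) j = π.symm j := rfl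
  rw [hinvj, hrl (π.symm j), Equiv.apply_symm_apply, Equiv.apply_symm_apply]

end FLL

end BadMono
namespace BadMono

open TreeAut

variable {d : ℕ}

lemma lmap_apply_apply (n : ℕ) (g h : TreeAut d)
    (x : {v : List (Fin d) // v.length = n}) :
    lmap n g (lmap n h x) = lmap n (h * g) x := by
  rw [lmap_mul n h g]; rfl

lemma fiber_card_eq {β γ : Type*} [DecidableEq γ] (Λ : Finset β) (r : β → γ) (y y' : γ)
    (T : β → β) (hinj : Function.Injective T)
    (hmap : ∀ q ∈ Λ.filter (fun q => r q = y), T q ∈ Λ.filter (fun q => r q = y'))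
    (hsurj : ∀ q' ∈ Λ.filter (fun q => r q = y'), ∃ q ∈ Λ.filter (fun q => r q = y), T q = q') :
    (Λ.filter (fun q => r q = y)).card = (Λ.filter (fun q => r q = y')).card :=
  Finset.card_bij (fun q _ => T q) hmap (fun a₁ _ a₂ _ h => hinj h)
    (fun b hb => by obtain ⟨q, hq, hTq⟩ := hsurj b hb; exact ⟨q, hq, hTq⟩)

section Counting

open scoped Classical

variable (i0 : Fin d) {G : Set (TreeAut d)}
  (hGmul : ∀ g ∈ G, ∀ h ∈ G, g * h ∈ G) (hGone : (1 : TreeAut d) ∈ G)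
  (hGinv : ∀ g ∈ G, g⁻¹ ∈ G)

lemma mem_levelImage_toFinset (n : ℕ) (q : {v : List (Fin d) // v.length = n} →
    {v : List (Fin d) // v.length = n}) :
    q ∈ (levelImage n G).toFinite.toFinset ↔ ∃ g ∈ G, lmap n g = q := by
  rw [Set.Finite.mem_toFinset]; exact Iff.rfl

include hGmul hGinv in
lemma restrict_fiber_const (n : ℕ) {g g' : TreeAut d} (hg : g ∈ G) (hg' : g' ∈ G) :
    (((levelImage (n+1) G).toFinite.toFinset).filter
        (fun q => restrict i0 n q = lmap n g)).card =
    (((levelImage (n+1) G).toFinite.toFinset).filter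
        (fun q => restrict i0 n q = lmap n g')).card := by
  classical
  set Λ := (levelImage (n+1) G).toFinite.toFinset with hΛ
  set gs := g⁻¹ * g' with hgs
  have hgsG : gs ∈ G := hGmul _ (hGinv g hg) _ hg'
  refine fiber_card_eq Λ (restrict i0 n) _ _ (fun q => (lmap (n+1) gs) ∘ q) ?_ ?_ ?_
  · intro q₁ q₂ h
    funext v
    exact lmap_injective (n+1) gs (congrFun h v)
  · intro q hq
    rw [Finset.mem_filter] at hq ⊢
    obtain ⟨hqΛ, hqr⟩ := hq
    obtain ⟨h, hh, rfl⟩ := (mem_levelImage_toFinset (n+1) q).mp hqΛ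
    have hcomp : (lmap (n+1) gs) ∘ (lmap (n+1) h) = lmap (n+1) (h * gs) :=
      (lmap_mul (n+1) h gs).symm
    beta_reduce
    rw [hcomp]
    refine ⟨(mem_levelImage_toFinset _ _).mpr ⟨h * gs, hGmul _ hh _ hgsG, rfl⟩, ?_⟩
    rw [restrict_lmap] at hqr ⊢
    rw [lmap_mul n h gs, hqr, ← lmap_mul n g gs, hgs, mul_inv_cancel_left]
  · intro q' hq'
    rw [Finset.mem_filter] at hq'
    obtain ⟨hq'Λ, hq'r⟩ := hq'
    obtain ⟨h', hh', rfl⟩ := (mem_levelImage_toFinset (n+1) q').mp hq'Λ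
    refine ⟨lmap (n+1) (h' * gs⁻¹), ?_, ?_⟩
    · rw [Finset.mem_filter]
      refine ⟨(mem_levelImage_toFinset _ _).mpr ⟨h' * gs⁻¹, hGmul _ hh' _ (hGinv _ hgsG), rfl⟩, ?_⟩
      rw [restrict_lmap] at hq'r ⊢
      rw [lmap_mul n h' gs⁻¹, hq'r, ← lmap_mul n g' gs⁻¹, hgs, mul_inv_rev, inv_inv,
        mul_inv_cancel_left]
    · show (lmap (n+1) gs) ∘ (lmap (n+1) (h' * gs⁻¹)) = lmap (n+1) h'
      rw [← lmap_mul (n+1) (h' * gs⁻¹) gs, inv_mul_cancel_right]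

end Counting

end BadMono
namespace BadMono

open TreeAut

variable {d : ℕ}

section Cosets

open scoped Classical

/-- canonical root label of a level-`n` permutation in `π_n(G)` -/
noncomputable def rlq (G : Set (TreeAut d)) (n : ℕ)
    (q : {v : List (Fin d) // v.length = n} → {v : List (Fin d) // v.length = n}) :
    Equiv.Perm (Fin d) :=
  if h : ∃ g ∈ G, lmap n g = q then rootLabel h.choose else 1

lemma rlq_lmap (i0 : Fin d) {G : Set (TreeAut d)} {n : ℕ} (hn : 1 ≤ n) {g : TreeAut d}
    (hg : g ∈ G) : rlq G n (lmap n g) = rootLabel g := by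
  have hex : ∃ g' ∈ G, lmap n g' = lmap n g := ⟨g, hg, rfl⟩
  rw [rlq, dif_pos hex]
  exact rootLabel_of_lmap i0 hn hex.choose_spec.2

/-- the coset class of a level-`n` permutation -/
noncomputable def clsq (N : Set (Equiv.Perm (Fin d))) (G : Set (TreeAut d)) (n : ℕ)
    (q : {v : List (Fin d) // v.length = n} → {v : List (Fin d) // v.length = n}) :
    Set (Equiv.Perm (Fin d)) :=
  {x | ∃ b ∈ N, x = b * rlq G n q}

lemma clsq_lmap (i0 : Fin d) (N : Set (Equiv.Perm (Fin d))) {G : Set (TreeAut d)} {n : ℕ}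
    (hn : 1 ≤ n) {g : TreeAut d} (hg : g ∈ G) :
    clsq N G n (lmap n g) = {x | ∃ b ∈ N, x = b * rootLabel g} := by
  rw [clsq, rlq_lmap i0 hn hg]

lemma coset_eq (N : Set (Equiv.Perm (Fin d)))
    (hNmul : ∀ a ∈ N, ∀ b ∈ N, a * b ∈ N) (hNinv : ∀ a ∈ N, a⁻¹ ∈ N)
    {a x : Equiv.Perm (Fin d)} (hx : ∃ b ∈ N, x = b * a) :
    {y | ∃ b ∈ N, y = b * x} = {y | ∃ b ∈ N, y = b * a} := by
  obtain ⟨b₀, hb₀, rfl⟩ := hx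
  ext y
  constructor
  · rintro ⟨c, hc, rfl⟩
    exact ⟨c * b₀, hNmul _ hc _ hb₀, by rw [mul_assoc]⟩
  · rintro ⟨c, hc, rfl⟩
    exact ⟨c * b₀⁻¹, hNmul _ hc _ (hNinv _ hb₀), by group⟩

lemma mem_clsq_self (N : Set (Equiv.Perm (Fin d))) (hNone : (1 : Equiv.Perm (Fin d)) ∈ N)
    (G : Set (TreeAut d)) (n : ℕ)
    (q : {v : List (Fin d) // v.length = n} → {v : List (Fin d) // v.length = n}) :
    rlq G n q ∈ clsq N G n q :=
  ⟨1, hNone, (one_mul _).symm⟩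

variable (i0 : Fin d) {G : Set (TreeAut d)}
  (hGmul : ∀ g ∈ G, ∀ h ∈ G, g * h ∈ G) (hGinv : ∀ g ∈ G, g⁻¹ ∈ G)
  {N : Set (Equiv.Perm (Fin d))} (hNone : (1 : Equiv.Perm (Fin d)) ∈ N)
  (hNmul : ∀ a ∈ N, ∀ b ∈ N, a * b ∈ N) (hNinv : ∀ a ∈ N, a⁻¹ ∈ N)
  {R : Set (Equiv.Perm (Fin d))}
  (hRL : ∀ g ∈ G, rootLabel g ∈ R) (hRinv : ∀ x ∈ R, x⁻¹ ∈ R)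
  (hNconj : ∀ b ∈ N, ∀ x ∈ R, x * b * x⁻¹ ∈ N)

include i0 hGmul hGinv hNone hNmul hNinv hRL hRinv hNconj in
lemma cls_fiber_const {n : ℕ} (hn : 1 ≤ n) {g g' : TreeAut d} (hg : g ∈ G) (hg' : g' ∈ G) :
    (((levelImage n G).toFinite.toFinset).filter
        (fun q => clsq N G n q = clsq N G n (lmap n g))).card =
    (((levelImage n G).toFinite.toFinset).filter
        (fun q => clsq N G n q = clsq N G n (lmap n g'))).card := by
  set Λ := (levelImage n G).toFinite.toFinset with hΛ
  set gs := g⁻¹ * g' with hgs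
  have hgsG : gs ∈ G := hGmul _ (hGinv g hg) _ hg'
  have hx1 : rootLabel g ∈ R := hRL g hg
  have hx2 : rootLabel g' ∈ R := hRL g' hg'
  have hrlgs : rootLabel gs = rootLabel g' * (rootLabel g)⁻¹ := by
    rw [hgs, rootLabel_mul, rootLabel_inv]
  have hrlgs' : rootLabel gs⁻¹ = rootLabel g * (rootLabel g')⁻¹ := by
    rw [rootLabel_inv, hrlgs, mul_inv_rev, inv_inv]
  refine fiber_card_eq Λ (clsq N G n) _ _ (fun q => (lmap n gs) ∘ q) ?_ ?_ ?_
  · intro q₁ q₂ h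
    funext v
    exact lmap_injective n gs (congrFun h v)
  · intro q hq
    rw [Finset.mem_filter] at hq ⊢
    obtain ⟨hqΛ, hqr⟩ := hq
    obtain ⟨h, hh, rfl⟩ := (mem_levelImage_toFinset n q).mp hqΛ
    have hcomp : (lmap n gs) ∘ (lmap n h) = lmap n (h * gs) := (lmap_mul n h gs).symm
    beta_reduce
    rw [hcomp]
    have hrlh : ∃ b ∈ N, rootLabel h = b * rootLabel g := by
      have h1 := mem_clsq_self N hNone G n (lmap n h)
      rw [rlq_lmap i0 hn hh, hqr, clsq_lmap i0 N hn hg] at h1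
      exact h1
    obtain ⟨b, hb, hbeq⟩ := hrlh
    have hc1 : (rootLabel g)⁻¹ * b * rootLabel g ∈ N := by
      have := hNconj b hb _ (hRinv _ hx1)
      rwa [inv_inv] at this
    have hc2 : rootLabel g' * ((rootLabel g)⁻¹ * b * rootLabel g) * (rootLabel g')⁻¹ ∈ N :=
      hNconj _ hc1 _ hx2
    refine ⟨(mem_levelImage_toFinset _ _).mpr ⟨h * gs, hGmul _ hh _ hgsG, rfl⟩, ?_⟩
    rw [clsq_lmap i0 N hn (hGmul _ hh _ hgsG), clsq_lmap i0 N hn hg']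
    apply coset_eq N hNmul hNinv
    refine ⟨_, hc2, ?_⟩
    rw [rootLabel_mul, hrlgs, hbeq]
    group
  · intro q' hq'
    rw [Finset.mem_filter] at hq'
    obtain ⟨hq'Λ, hq'r⟩ := hq'
    obtain ⟨h', hh', rfl⟩ := (mem_levelImage_toFinset n q').mp hq'Λ
    have hrlh' : ∃ b ∈ N, rootLabel h' = b * rootLabel g' := by
      have h1 := mem_clsq_self N hNone G n (lmap n h')
      rw [rlq_lmap i0 hn hh', hq'r, clsq_lmap i0 N hn hg'] at h1
      exact h1
    obtain ⟨b', hb', hb'eq⟩ := hrlh'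
    have hc1 : (rootLabel g')⁻¹ * b' * rootLabel g' ∈ N := by
      have := hNconj b' hb' _ (hRinv _ hx2)
      rwa [inv_inv] at this
    have hc2 : rootLabel g * ((rootLabel g')⁻¹ * b' * rootLabel g') * (rootLabel g)⁻¹ ∈ N :=
      hNconj _ hc1 _ hx1
    refine ⟨lmap n (h' * gs⁻¹), ?_, ?_⟩
    · rw [Finset.mem_filter]
      refine ⟨(mem_levelImage_toFinset _ _).mpr
        ⟨h' * gs⁻¹, hGmul _ hh' _ (hGinv _ hgsG), rfl⟩, ?_⟩
      rw [clsq_lmap i0 N hn (hGmul _ hh' _ (hGinv _ hgsG)), clsq_lmap i0 N hn hg]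
      apply coset_eq N hNmul hNinv
      refine ⟨_, hc2, ?_⟩
      rw [rootLabel_mul, hrlgs', hb'eq]
      group
    · show (lmap n gs) ∘ (lmap n (h' * gs⁻¹)) = lmap n h'
      rw [← lmap_mul n (h' * gs⁻¹) gs, inv_mul_cancel_right]

end Cosets

end BadMono
namespace BadMono

open TreeAut

variable {d : ℕ}

section Ratios

open scoped Classical

variable (i0 : Fin d) {G : Set (TreeAut d)}
  (hGmul : ∀ g ∈ G, ∀ h ∈ G, g * h ∈ G) (hGone : (1 : TreeAut d) ∈ G)
  (hGinv : ∀ g ∈ G, g⁻¹ ∈ G)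

include i0 hGmul hGone hGinv in
lemma ratio_antitone (n : ℕ) : fixRatio G (n + 1) ≤ fixRatio G n := by
  set Λ1 := (levelImage (n+1) G).toFinite.toFinset with hΛ1
  set Λ0 := (levelImage n G).toFinite.toFinset with hΛ0
  have himg : Λ1.image (restrict i0 n) = Λ0 := by
    ext y
    simp only [Finset.mem_image]
    constructor
    · rintro ⟨q, hq, rfl⟩
      obtain ⟨g, hg, rfl⟩ := (mem_levelImage_toFinset (n+1) q).mp hq
      rw [restrict_lmap]
      exact (mem_levelImage_toFinset n _).mpr ⟨g, hg, rfl⟩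
    · intro hy
      obtain ⟨g, hg, rfl⟩ := (mem_levelImage_toFinset n y).mp hy
      exact ⟨lmap (n+1) g, (mem_levelImage_toFinset _ _).mpr ⟨g, hg, rfl⟩, restrict_lmap i0 n g⟩
  set k := (Λ1.filter (fun q => restrict i0 n q = lmap n 1)).card with hkdef
  have hfibers : ∀ y ∈ Λ1.image (restrict i0 n),
      (Λ1.filter (fun q => restrict i0 n q = y)).card = k := by
    intro y hy
    rw [himg] at hy
    obtain ⟨g, hg, rfl⟩ := (mem_levelImage_toFinset n y).mp hy
    exact restrict_fiber_const i0 hGmul hGinv n hg hGone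
  have htotal : Λ1.card = Λ0.card * k := by
    have h1 := card_filter_mem_of_const_fibers Λ1 (restrict i0 n) k hfibers Λ0
      (le_of_eq himg.symm)
    rwa [Finset.filter_true_of_mem
      (fun q hq => himg ▸ Finset.mem_image_of_mem _ hq)] at h1
  set T := Λ0.filter (fun y => ∃ v, y v = v) with hT
  have hcount : (Λ1.filter (fun q => restrict i0 n q ∈ T)).card = T.card * k :=
    card_filter_mem_of_const_fibers Λ1 (restrict i0 n) k hfibers T
      (by rw [himg]; exact Finset.filter_subset _ _)
  have hsub : Λ1.filter (fun q => ∃ v, q v = v) ⊆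
      Λ1.filter (fun q => restrict i0 n q ∈ T) := by
    intro q hq
    rw [Finset.mem_filter] at hq ⊢
    obtain ⟨hqΛ, v, hv⟩ := hq
    refine ⟨hqΛ, ?_⟩
    obtain ⟨g, hg, rfl⟩ := (mem_levelImage_toFinset (n+1) q).mp hqΛ
    rw [restrict_lmap, hT, Finset.mem_filter]
    refine ⟨(mem_levelImage_toFinset n _).mpr ⟨g, hg, rfl⟩, ?_⟩
    have hfix : g.toPerm v.1 = v.1 := congrArg Subtype.val hv
    exact ⟨⟨v.1.take n, by rw [List.length_take, v.2]; omega⟩,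
      Subtype.ext (fix_take g hfix n)⟩
  have hΛ0one : lmap n (1 : TreeAut d) ∈ Λ0 := (mem_levelImage_toFinset n _).mpr ⟨1, hGone, rfl⟩
  have hΛ0pos : 0 < Λ0.card := Finset.card_pos.mpr ⟨_, hΛ0one⟩
  have hr1 : fixRatio G (n+1) =
      ((Λ1.filter (fun q => ∃ v, q v = v)).card : ℝ) / (Λ1.card : ℝ) := by
    have hnum' : {q ∈ levelImage (n+1) G | ∃ v, q v = v}.ncard
        = (Λ1.filter (fun q => ∃ v, q v = v)).card := by
      rw [← Set.ncard_coe_finset (Λ1.filter (fun q => ∃ v, q v = v))]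
      congr 1
      rw [Finset.coe_filter]
      ext q
      simp only [hΛ1, Set.mem_setOf_eq, Set.Finite.mem_toFinset]
    have hden' : (levelImage (n+1) G).ncard = Λ1.card := by
      rw [← Set.ncard_coe_finset Λ1]
      congr 1
      exact (Set.Finite.coe_toFinset _).symm
    unfold fixRatio
    rw [hnum', hden']
  have hr0 : fixRatio G n =
      ((Λ0.filter (fun q => ∃ v, q v = v)).card : ℝ) / (Λ0.card : ℝ) := by
    have hnum' : {q ∈ levelImage n G | ∃ v, q v = v}.ncard
        = (Λ0.filter (fun q => ∃ v, q v = v)).card := by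
      rw [← Set.ncard_coe_finset (Λ0.filter (fun q => ∃ v, q v = v))]
      congr 1
      rw [Finset.coe_filter]
      ext q
      simp only [hΛ0, Set.mem_setOf_eq, Set.Finite.mem_toFinset]
    have hden' : (levelImage n G).ncard = Λ0.card := by
      rw [← Set.ncard_coe_finset Λ0]
      congr 1
      exact (Set.Finite.coe_toFinset _).symm
    unfold fixRatio
    rw [hnum', hden']
  rw [hr1, hr0]
  rcases Nat.eq_zero_or_pos k with hk0 | hkpos
  · -- k = 0 : Λ1 is empty, ratio is 0/0 = 0
    have hΛ1card : Λ1.card = 0 := by rw [htotal, hk0, mul_zero]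
    have hfilter0 : (Λ1.filter (fun q => ∃ v, q v = v)).card = 0 :=
      Nat.eq_zero_of_le_zero (le_trans (Finset.card_le_card (Finset.filter_subset _ _))
        (le_of_eq hΛ1card))
    rw [hfilter0]
    simp
    positivity
  · have hnum : ((Λ1.filter (fun q => ∃ v, q v = v)).card : ℝ) ≤ (T.card : ℝ) * k := by
      have := Finset.card_le_card hsub
      rw [hcount] at this
      exact_mod_cast this
    have hden : (Λ1.card : ℝ) = (Λ0.card : ℝ) * k := by exact_mod_cast htotal
    rw [hden]
    have hdpos : (0:ℝ) < (Λ0.card : ℝ) * k := by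
      have := Nat.mul_pos hΛ0pos hkpos
      exact_mod_cast this
    calc ((Λ1.filter (fun q => ∃ v, q v = v)).card : ℝ) / ((Λ0.card : ℝ) * k)
        ≤ ((T.card : ℝ) * k) / ((Λ0.card : ℝ) * k) := by gcongr
      _ = (T.card : ℝ) / (Λ0.card : ℝ) := by
          rw [mul_div_mul_right _ _ (by exact_mod_cast hkpos.ne' : (k:ℝ) ≠ 0)]

end Ratios

end BadMono
namespace BadMono

open TreeAut

variable {d : ℕ}

section Bound

open scoped Classical

variable (i0 : Fin d) {G : Set (TreeAut d)}
  (hGmul : ∀ g ∈ G, ∀ h ∈ G, g * h ∈ G) (hGone : (1 : TreeAut d) ∈ G)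
  (hGinv : ∀ g ∈ G, g⁻¹ ∈ G)
  {N : Set (Equiv.Perm (Fin d))} (hNone : (1 : Equiv.Perm (Fin d)) ∈ N)
  (hNmul : ∀ a ∈ N, ∀ b ∈ N, a * b ∈ N) (hNinv : ∀ a ∈ N, a⁻¹ ∈ N)
  {R : Set (Equiv.Perm (Fin d))}
  (hRL : ∀ g ∈ G, rootLabel g ∈ R) (hRinv : ∀ x ∈ R, x⁻¹ ∈ R)
  (hNconj : ∀ b ∈ N, ∀ x ∈ R, x * b * x⁻¹ ∈ N)

include i0 hGmul hGone hGinv hNone hNmul hNinv hRL hRinv hNconj in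
lemma level_bound
    (hRG : ∀ x ∈ R, ∃ g ∈ G, rootLabel g = x)
    (M Qc : Set (Set (Equiv.Perm (Fin d))))
    (hQc : Qc = {C | ∃ a ∈ R, C = {x | ∃ b ∈ N, x = b * a}})
    (hMQc : M ⊆ Qc)
    (hfixM : ∀ g ∈ G, (∃ C ∈ M, rootLabel g ∈ C) →
      ∀ m : ℕ, ∃ w : List (Fin d), w.length = m ∧ g.toPerm w = w)
    {n : ℕ} (hn : 1 ≤ n) :
    (M.ncard : ℝ) / (Qc.ncard : ℝ) ≤ fixRatio G n := by
  set Λ := (levelImage n G).toFinite.toFinset with hΛ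
  have hΛone : lmap n (1 : TreeAut d) ∈ Λ := (mem_levelImage_toFinset n _).mpr ⟨1, hGone, rfl⟩
  set Qfin := Qc.toFinite.toFinset with hQfin
  have himg : Λ.image (clsq N G n) = Qfin := by
    ext C
    simp only [Finset.mem_image, hQfin, Set.Finite.mem_toFinset]
    constructor
    · rintro ⟨q, hq, rfl⟩
      obtain ⟨g, hg, rfl⟩ := (mem_levelImage_toFinset n q).mp hq
      rw [hQc]
      exact ⟨rootLabel g, hRL g hg, by rw [clsq_lmap i0 N hn hg]⟩
    · intro hC
      rw [hQc] at hC
      obtain ⟨a, haR, rfl⟩ := hC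
      obtain ⟨g, hg, rfl⟩ := hRG a haR
      exact ⟨lmap n g, (mem_levelImage_toFinset n _).mpr ⟨g, hg, rfl⟩,
        by rw [clsq_lmap i0 N hn hg]⟩
  set k := (Λ.filter (fun q => clsq N G n q = clsq N G n (lmap n 1))).card with hkdef
  have hfibers : ∀ C ∈ Λ.image (clsq N G n),
      (Λ.filter (fun q => clsq N G n q = C)).card = k := by
    intro C hC
    obtain ⟨q, hq, rfl⟩ := Finset.mem_image.mp hC
    obtain ⟨g, hg, rfl⟩ := (mem_levelImage_toFinset n q).mp hq
    exact cls_fiber_const i0 hGmul hGinv hNone hNmul hNinv hRL hRinv hNconj hn hg hGone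
  have htotal : Λ.card = Qfin.card * k := by
    have h1 := card_filter_mem_of_const_fibers Λ (clsq N G n) k hfibers Qfin
      (le_of_eq himg.symm)
    rwa [Finset.filter_true_of_mem
      (fun q hq => himg ▸ Finset.mem_image_of_mem _ hq)] at h1
  set Mfin := M.toFinite.toFinset with hMfin
  have hMsubQ : Mfin ⊆ Qfin := by
    intro C hC
    rw [hMfin, Set.Finite.mem_toFinset] at hC
    rw [hQfin, Set.Finite.mem_toFinset]
    exact hMQc hC
  have hMcount : (Λ.filter (fun q => clsq N G n q ∈ Mfin)).card = Mfin.card * k :=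
    card_filter_mem_of_const_fibers Λ (clsq N G n) k hfibers Mfin (himg ▸ hMsubQ)
  have hsubfix : Λ.filter (fun q => clsq N G n q ∈ Mfin) ⊆
      Λ.filter (fun q => ∃ v, q v = v) := by
    intro q hq
    rw [Finset.mem_filter] at hq ⊢
    obtain ⟨hqΛ, hqM⟩ := hq
    refine ⟨hqΛ, ?_⟩
    obtain ⟨g, hg, rfl⟩ := (mem_levelImage_toFinset n q).mp hqΛ
    have hCM : clsq N G n (lmap n g) ∈ M := by
      rw [hMfin, Set.Finite.mem_toFinset] at hqM
      exact hqM
    have hrlmem : rootLabel g ∈ clsq N G n (lmap n g) := by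
      have h1 := mem_clsq_self N hNone G n (lmap n g)
      rwa [rlq_lmap i0 hn hg] at h1
    obtain ⟨w, hwlen, hwfix⟩ := hfixM g hg ⟨_, hCM, hrlmem⟩ n
    exact ⟨⟨w, hwlen⟩, Subtype.ext hwfix⟩
  have hkpos : 0 < k := by
    rw [hkdef]
    exact Finset.card_pos.mpr ⟨lmap n 1, Finset.mem_filter.mpr ⟨hΛone, rfl⟩⟩
  have hQpos : 0 < Qfin.card := by
    rw [← himg]
    exact Finset.card_pos.mpr ⟨_, Finset.mem_image_of_mem _ hΛone⟩
  have hr : fixRatio G n =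
      ((Λ.filter (fun q => ∃ v, q v = v)).card : ℝ) / (Λ.card : ℝ) := by
    have hnum' : {q ∈ levelImage n G | ∃ v, q v = v}.ncard
        = (Λ.filter (fun q => ∃ v, q v = v)).card := by
      rw [← Set.ncard_coe_finset (Λ.filter (fun q => ∃ v, q v = v))]
      congr 1
      rw [Finset.coe_filter]
      ext q
      simp only [hΛ, Set.mem_setOf_eq, Set.Finite.mem_toFinset]
    have hden' : (levelImage n G).ncard = Λ.card := by
      rw [← Set.ncard_coe_finset Λ]
      congr 1
      exact (Set.Finite.coe_toFinset _).symm
    unfold fixRatio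
    rw [hnum', hden']
  rw [hr]
  have hMcard : (M.ncard : ℝ) = (Mfin.card : ℝ) := by
    rw [Set.ncard_eq_toFinset_card M (Set.toFinite M)]
  have hQcard : (Qc.ncard : ℝ) = (Qfin.card : ℝ) := by
    rw [Set.ncard_eq_toFinset_card Qc (Set.toFinite Qc)]
  rw [hMcard, hQcard]
  have hnum : ((Mfin.card : ℝ) * k) ≤ ((Λ.filter (fun q => ∃ v, q v = v)).card : ℝ) := by
    have h2 := Finset.card_le_card hsubfix
    rw [hMcount] at h2
    exact_mod_cast h2
  have hden : (Λ.card : ℝ) = (Qfin.card : ℝ) * k := by exact_mod_cast htotal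
  rw [hden]
  have hdpos : (0:ℝ) < (Qfin.card : ℝ) * k := by
    have := Nat.mul_pos hQpos hkpos
    exact_mod_cast this
  calc (Mfin.card : ℝ) / (Qfin.card : ℝ)
      = ((Mfin.card : ℝ) * k) / ((Qfin.card : ℝ) * k) := by
        rw [mul_div_mul_right _ _ (by exact_mod_cast hkpos.ne' : (k:ℝ) ≠ 0)]
    _ ≤ _ := by gcongr

end Bound

end BadMono
/-- Let `K` be a field and `f ∈ K(z)` a rational function of degree
`d ≥ 2` with bad monodromy, witnessed by a nonempty set of cosets `M` inside
`Q := π₁(G_∞(K,f,t))/π₁(G_∞(K^sep,f,t))`.  Let `α ∈ K` be not strictly post-critical for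
`f` and suppose `π₁(G_∞(K,f,t)) = π₁(G_∞(K,f,α))`.  Then
`FPP(G_∞(K,f,α)) ≥ #M/|Q| > 0`. -/
theorem badMonodromy_FPP_specialization
    (K : Type*) [Field K]
    -- the rational function `f = P/Q ∈ K(z)` of degree `d ≥ 2`:
    (P Q : Polynomial K) (hPQ : IsCoprime P Q)
    (d : ℕ) (hd : 2 ≤ d) (hdeg : max P.natDegree Q.natDegree = d)
    -- the preimage tree `T = ⊔_n f^{-n}(t)`, which is `d`-adic since `t` is transcendental:
    (ι : List (Fin d) → AlgebraicClosure (RatFunc K))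
    (hroot : ι [] = algebraMap (RatFunc K) (AlgebraicClosure (RatFunc K)) RatFunc.X)
    (hchild : ∀ (v : List (Fin d)) (i : Fin d),
      Polynomial.aeval (ι (v ++ [i])) P = ι v * Polynomial.aeval (ι (v ++ [i])) Q)
    (hinj : ∀ v w : List (Fin d), v.length = w.length → ι v = ι w → v = w)
    (hsurj : ∀ (v : List (Fin d)) (y : AlgebraicClosure (RatFunc K)),
      Polynomial.aeval y P = ι v * Polynomial.aeval y Q → ∃ i : Fin d, y = ι (v ++ [i]))
    -- the arboreal Galois representation `ρ : Gal(K(t)^sep/K(t)) → Aut T`: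
    (ρ : (AlgebraicClosure (RatFunc K) ≃ₐ[RatFunc K] AlgebraicClosure (RatFunc K)) → TreeAut d)
    (hρ : ∀ σ (v : List (Fin d)), ι ((ρ σ).toPerm v) = σ (ι v))
    -- `α ∈ K` is not strictly post-critical: the preimage tree
    -- `T_α = ⊔_n f^{-n}(α)` is `d`-adic, embedded via `ια`:
    (α : K) (ια : List (Fin d) → AlgebraicClosure (RatFunc K))
    (hαroot : ια [] = algebraMap K (AlgebraicClosure (RatFunc K)) α)
    (hαchild : ∀ (v : List (Fin d)) (i : Fin d),
      Polynomial.aeval (ια (v ++ [i])) P = ια v * Polynomial.aeval (ια (v ++ [i])) Q)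
    (hαinj : ∀ v w : List (Fin d), v.length = w.length → ια v = ια w → v = w)
    (hαsurj : ∀ (v : List (Fin d)) (y : AlgebraicClosure (RatFunc K)),
      Polynomial.aeval y P = ια v * Polynomial.aeval y Q → ∃ i : Fin d, y = ια (v ++ [i]))
    -- the specialized arboreal representation `ρα : Gal(K^sep/K) → Aut T_α` (automorphisms
    -- of `Ω` over `K` restrict/extend to `K^sep` with the same action on `T_α`):
    (ρα : (AlgebraicClosure (RatFunc K) ≃ₐ[K] AlgebraicClosure (RatFunc K)) → TreeAut d)
    (hρα : ∀ σ (v : List (Fin d)), ια ((ρα σ).toPerm v) = σ (ια v))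
    -- `G_∞(K,f,α)` embeds into `G_∞(K,f,t)` as the decomposition subgroup of a prime of
    -- `K_∞(f,t)` above `(t−α)` (the tree coordinates are chosen compatibly):
    (hembed : Set.range ρα ⊆ Set.range ρ)
    -- bad monodromy, witnessed by `M`:
    (M : Set (Set (Equiv.Perm (Fin d))))
    (hMsub : M ⊆ rootCosets (ρ '' sepFixing K) (Set.range ρ))
    (hMne : M.Nonempty)
    (hMfix : ∀ C ∈ M, ∀ x ∈ C, ∃ i : Fin d, x i = i)
    -- `π₁(G_∞(K,f,t)) = π₁(G_∞(K,f,α))`: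
    (hmono : rootImage (Set.range ρ) = rootImage (Set.range ρα)) :
    FPP (Set.range ρα) ≥
      (M.ncard : ℝ) / ((rootCosets (ρ '' sepFixing K) (Set.range ρ)).ncard : ℝ) ∧
    (0 : ℝ) <
      (M.ncard : ℝ) / ((rootCosets (ρ '' sepFixing K) (Set.range ρ)).ncard : ℝ) := by
  classical
  have hd1 : 0 < d := by omega
  set i0 : Fin d := ⟨0, hd1⟩ with hi0
  -- group structure of the representations
  have hμα : ∀ σ σ', ρα σ * ρα σ' = ρα (σ.trans σ') := fun σ σ' =>
    BadMono.rep_mul ια hαinj (hρα σ) (hρα σ') (fun v => by rw [hρα]; rfl)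
  have hμ : ∀ σ σ', ρ σ * ρ σ' = ρ (σ.trans σ') := fun σ σ' =>
    BadMono.rep_mul ι hinj (hρ σ) (hρ σ') (fun v => by rw [hρ]; rfl)
  have h1α : ρα AlgEquiv.refl = 1 := BadMono.rep_one ια hαinj (fun v => by rw [hρα]; rfl)
  have h1ρ : ρ AlgEquiv.refl = 1 := BadMono.rep_one ι hinj (fun v => by rw [hρ]; rfl)
  have hinvα : ∀ σ, (ρα σ)⁻¹ = ρα σ.symm := fun σ => by
    have h := hμα σ σ.symm
    have h2 : σ.trans σ.symm = AlgEquiv.refl := by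
      apply AlgEquiv.ext; intro x; exact σ.symm_apply_apply x
    rw [h2, h1α] at h
    exact inv_eq_of_mul_eq_one_right h
  have hinvρ : ∀ σ, (ρ σ)⁻¹ = ρ σ.symm := fun σ => by
    have h := hμ σ σ.symm
    have h2 : σ.trans σ.symm = AlgEquiv.refl := by
      apply AlgEquiv.ext; intro x; exact σ.symm_apply_apply x
    rw [h2, h1ρ] at h
    exact inv_eq_of_mul_eq_one_right h
  have hGmul : ∀ g ∈ Set.range ρα, ∀ h ∈ Set.range ρα, g * h ∈ Set.range ρα := by
    rintro g ⟨σ, rfl⟩ h ⟨σ', rfl⟩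
    exact ⟨σ.trans σ', (hμα σ σ').symm⟩
  have hGone : (1 : TreeAut d) ∈ Set.range ρα := ⟨AlgEquiv.refl, h1α⟩
  have hGinv : ∀ g ∈ Set.range ρα, g⁻¹ ∈ Set.range ρα := by
    rintro g ⟨σ, rfl⟩
    exact ⟨σ.symm, (hinvα σ).symm⟩
  -- the geometric subgroup of sep-fixing automorphisms
  have hsepone : (AlgEquiv.refl : AlgebraicClosure (RatFunc K) ≃ₐ[RatFunc K]
      AlgebraicClosure (RatFunc K)) ∈ sepFixing K := fun x _ => rfl
  have hseptrans : ∀ s ∈ sepFixing K, ∀ t ∈ sepFixing K, s.trans t ∈ sepFixing K := by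
    intro s hs t ht x hx
    show t (s x) = x
    rw [hs x hx, ht x hx]
  have hsepsymm : ∀ s ∈ sepFixing K, s.symm ∈ sepFixing K := by
    intro s hs x hx
    conv_lhs => rw [← hs x hx]
    exact s.symm_apply_apply x
  have hNmem : ∀ s ∈ sepFixing K, rootLabel (ρ s) ∈ rootImage (ρ '' sepFixing K) :=
    fun s hs => ⟨ρ s, ⟨s, hs, rfl⟩, rfl⟩
  have hNone : (1 : Equiv.Perm (Fin d)) ∈ rootImage (ρ '' sepFixing K) := by
    have h := hNmem _ hsepone
    rwa [h1ρ, BadMono.rootLabel_one] at h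
  have hNmul : ∀ a ∈ rootImage (ρ '' sepFixing K), ∀ b ∈ rootImage (ρ '' sepFixing K),
      a * b ∈ rootImage (ρ '' sepFixing K) := by
    rintro a ⟨ga, ⟨s, hs, rfl⟩, rfl⟩ b ⟨gb, ⟨t, ht, rfl⟩, rfl⟩
    have h := BadMono.rootLabel_mul (ρ t) (ρ s)
    rw [hμ t s] at h
    rw [← h]
    exact hNmem _ (hseptrans t ht s hs)
  have hNinv : ∀ a ∈ rootImage (ρ '' sepFixing K), a⁻¹ ∈ rootImage (ρ '' sepFixing K) := by
    rintro a ⟨ga, ⟨s, hs, rfl⟩, rfl⟩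
    rw [← BadMono.rootLabel_inv, hinvρ]
    exact hNmem _ (hsepsymm s hs)
  have hRinv : ∀ x ∈ rootImage (Set.range ρ), x⁻¹ ∈ rootImage (Set.range ρ) := by
    rintro x ⟨gx, ⟨σ, rfl⟩, rfl⟩
    rw [← BadMono.rootLabel_inv, hinvρ]
    exact ⟨ρ σ.symm, ⟨σ.symm, rfl⟩, rfl⟩
  have hNconj : ∀ b ∈ rootImage (ρ '' sepFixing K), ∀ x ∈ rootImage (Set.range ρ),
      x * b * x⁻¹ ∈ rootImage (ρ '' sepFixing K) := by
    rintro b ⟨gb, ⟨s, hs, rfl⟩, rfl⟩ x ⟨gx, ⟨σ, rfl⟩, rfl⟩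
    have hmemu : (σ.symm.trans (s.trans σ)) ∈ sepFixing K := by
      intro y hy
      have h1 : σ.symm y ∈ separableClosure K (AlgebraicClosure (RatFunc K)) :=
        BadMono.sep_map σ.symm hy
      show σ (s (σ.symm y)) = y
      rw [hs _ h1, σ.apply_symm_apply]
    have hval := hNmem _ hmemu
    have e1 : ρ (σ.symm.trans (s.trans σ)) = ρ σ.symm * ρ (s.trans σ) := (hμ _ _).symm
    have e2 : ρ (s.trans σ) = ρ s * ρ σ := (hμ _ _).symm
    rw [e1, e2, BadMono.rootLabel_mul, BadMono.rootLabel_mul, ← hinvρ σ,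
      BadMono.rootLabel_inv] at hval
    exact hval
  have hRL : ∀ g ∈ Set.range ρα, rootLabel g ∈ rootImage (Set.range ρ) := by
    intro g hg
    rw [hmono]
    exact ⟨g, hg, rfl⟩
  have hRG : ∀ x ∈ rootImage (Set.range ρ), ∃ g ∈ Set.range ρα, rootLabel g = x := by
    intro x hx
    rw [hmono] at hx
    exact hx
  -- every element whose root class lies in `M` fixes a vertex at every level
  have hKEY : ∀ g ∈ Set.range ρα, (∃ C ∈ M, rootLabel g ∈ C) →
      ∀ m : ℕ, ∃ w : List (Fin d), w.length = m ∧ g.toPerm w = w := by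
    intro g hg hC m
    induction m with
    | zero => exact ⟨[], rfl, BadMono.tp_nil g⟩
    | succ m ih =>
        obtain ⟨w, hwlen, hwfix⟩ := ih
        obtain ⟨τ, hτ⟩ := hembed hg
        obtain ⟨s, hsmem, π, hπ⟩ := BadMono.label_conj P Q hPQ ι hroot hchild hinj hsurj ρ hρ
          τ w (by rw [hτ]; exact hwfix)
        obtain ⟨C, hCM, hgC⟩ := hC
        obtain ⟨a, ha, hCa⟩ := hMsub hCM
        rw [hCa] at hgC
        obtain ⟨b₀, hb₀, hb₀eq⟩ := hgC
        have hy : rootLabel (ρ s) * rootLabel g ∈ C := by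
          rw [hCa]
          exact ⟨rootLabel (ρ s) * b₀, hNmul _ (hNmem s hsmem) _ hb₀, by rw [hb₀eq, mul_assoc]⟩
        obtain ⟨i, hi⟩ := hMfix C hCM _ hy
        rw [hτ] at hπ
        have hlab : TreeAut.label g w (π i) = π i := by
          rw [hπ]
          show π ((rootLabel (ρ s) * rootLabel g) (π⁻¹ (π i))) = π i
          rw [show π⁻¹ (π i) = i from π.symm_apply_apply i, hi]
        exact ⟨w ++ [π i], by simp [hwlen], BadMono.fix_concat g hwfix hlab⟩
  -- the fixed-point ratio is antitone and bounded below by #M/#Q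
  have hanti : ∀ n, fixRatio (Set.range ρα) (n+1) ≤ fixRatio (Set.range ρα) n :=
    fun n => BadMono.ratio_antitone i0 hGmul hGone hGinv n
  have hantitone : Antitone (fixRatio (Set.range ρα)) := antitone_nat_of_succ_le hanti
  have hb : ∀ n, (M.ncard : ℝ) / ((rootCosets (ρ '' sepFixing K) (Set.range ρ)).ncard : ℝ)
      ≤ fixRatio (Set.range ρα) n := by
    have h1 : ∀ n, 1 ≤ n →
        (M.ncard : ℝ) / ((rootCosets (ρ '' sepFixing K) (Set.range ρ)).ncard : ℝ)
          ≤ fixRatio (Set.range ρα) n := fun n hn =>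
      BadMono.level_bound i0 hGmul hGone hGinv hNone hNmul hNinv hRL hRinv hNconj hRG
        M (rootCosets (ρ '' sepFixing K) (Set.range ρ)) rfl hMsub hKEY hn
    intro n
    cases n with
    | zero => exact le_trans (h1 1 le_rfl) (hanti 0)
    | succ n => exact h1 (n+1) (by omega)
  have hlow : ∀ n, (0:ℝ) ≤ fixRatio (Set.range ρα) n := by
    intro n
    unfold fixRatio
    positivity
  have htend : Filter.Tendsto (fixRatio (Set.range ρα)) Filter.atTop
      (nhds (⨅ n, fixRatio (Set.range ρα) n)) :=
    tendsto_atTop_ciInf hantitone ⟨0, by rintro x ⟨n, rfl⟩; exact hlow n⟩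
  have hFPP : FPP (Set.range ρα) = ⨅ n, fixRatio (Set.range ρα) n := by
    unfold FPP
    exact htend.limUnder_eq
  constructor
  · rw [ge_iff_le, hFPP]
    exact le_ciInf hb
  · obtain ⟨C0, hC0⟩ := hMne
    have hMpos : 0 < M.ncard := (Set.ncard_pos (Set.toFinite M)).mpr ⟨C0, hC0⟩
    have hQpos : 0 < (rootCosets (ρ '' sepFixing K) (Set.range ρ)).ncard :=
      (Set.ncard_pos (Set.toFinite _)).mpr ⟨C0, hMsub hC0⟩
    exact div_pos (by exact_mod_cast hMpos) (by exact_mod_cast hQpos)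

end ArboGal
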